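/- arXiv:1705.05213 — 12 statements merged into one kernel-verified Lean document; each statement's English description precedes it below -/
import Mathlib

section
/- Let n ≥ 1 and t be integers, and for each integer t let B_t := {(j_1,…,j_n) ∈ ℤ^n : 1 ≤ j_k ≤ t−k for all 1 ≤ k ≤ n}. For a permutation σ of {1,…,n} let σ(B_t) := {(j_{σ(1)},…,j_{σ(n)}) : (j_1,…,j_n) ∈ B_t}. If t ≥ n+1 then the cardinality of the union ∪_σ σ(B_t) over all permutations σ of {1,…,n} equals (t−n)·t^{n−1}, and if t ≤ n then this union is empty. -/
/-!
Put `y = t - x`. A tuple lies in the union iff some permutation `σ` has `σ m < y m ≤ t - 1`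
for all `m`, i.e. (sorting `y`) iff `#{m | y m ≤ j} ≤ j` for every `j`; such `y` can be read
in `ZMod t`. The count is Pollak's cyclic argument: for every `w : Fin n → ZMod t`, exactly
`t - n` of the `t` diagonal shifts `w - c` satisfy the condition. Indeed the shift by `s` is good
iff `s` is a strict maximum on `(s, s + t]` of the walk `j ↦ ∑_{r<j} (#{m | w m = r} - 1)`, which
steps down by at most one and drops by `t - n` over each period; those positions are where the
maximum of the walk over `[s, s + t]` decreases, so there are `t - n` of them per period.
Counting pairs `(w, c)` both ways gives `t · #good = t ^ n · (t - n)`.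
-/

open Finset

theorem exists_perm_lt_iff_card_le {n : ℕ} (f : Fin n → ℕ) :
    (∃ σ : Equiv.Perm (Fin n), ∀ m, (σ m : ℕ) < f m) ↔ ∀ j, #{m | f m ≤ j} ≤ j := by
  constructor
  · rintro ⟨σ, hσ⟩ j
    calc #{m | f m ≤ j} ≤ #(range j) := by
          refine card_le_card_of_injOn (fun m => (σ m : ℕ)) (fun m hm => ?_) ?_
          · simp only [coe_filter, mem_univ, true_and, Set.mem_ofPred_eq, coe_range,
              Set.mem_Iio] at hm ⊢
            exact (hσ m).trans_le hm
          · exact fun a _ b _ h => σ.injective (Fin.val_injective h)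
      _ = j := card_range j
  · intro hcard
    refine ⟨(Tuple.sort f).symm, fun m => not_le.1 fun hle => ?_⟩
    -- once `f` is sorted increasingly, the first `σ m + 1` entries are all at most `f m`
    have : #(Iic ((Tuple.sort f).symm m)) ≤ #{m' | f m' ≤ f m} := by
      refine card_le_card_of_injOn (Tuple.sort f) (fun i hi => ?_) (Tuple.sort f).injective.injOn
      simp only [coe_Iic, Set.mem_Iic, coe_filter, mem_univ, true_and, Set.mem_ofPred_eq] at hi ⊢
      simpa using Tuple.monotone_sort f hi
    rw [Fin.card_Iic] at this
    have := hcard (f m)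
    omega

section CyclicLemma

variable (G : ℕ → ℤ) (T : ℕ)

def windowMax (s : ℕ) : ℤ :=
  (Icc s (s + T)).sup' (nonempty_Icc.2 (Nat.le_add_right s T)) G

variable {G T} {d : ℕ}

theorem exists_eq_windowMax (s : ℕ) : ∃ x ∈ Icc s (s + T), windowMax G T s = G x :=
  exists_mem_eq_sup' _ G

variable (hT : 0 < T) (hper : ∀ x, G (x + T) = G x - d)
include hT hper

theorem le_windowMax {s x : ℕ} (hsx : s ≤ x) : G x ≤ windowMax G T s := by
  induction x using Nat.strong_induction_on with
  | _ x ih =>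
    by_cases hx : x ≤ s + T
    · exact le_sup' G (mem_Icc.2 ⟨hsx, hx⟩)
    · obtain ⟨y, rfl⟩ : ∃ y, x = y + T := ⟨x - T, by omega⟩
      have := ih y (by omega) (by omega)
      rw [hper]
      omega

theorem windowMax_succ_le (s : ℕ) : windowMax G T (s + 1) ≤ windowMax G T s :=
  sup'_le _ _ fun x hx => le_windowMax hT hper (by have := (mem_Icc.1 hx).1; omega)

theorem windowMax_add_period (s : ℕ) : windowMax G T (s + T) = windowMax G T s - d := by
  obtain ⟨x, hx, hMx⟩ := exists_eq_windowMax (G := G) (T := T) (s + T)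
  obtain ⟨y, hy, hMy⟩ := exists_eq_windowMax (G := G) (T := T) s
  obtain ⟨x, rfl⟩ : ∃ x', x = x' + T := ⟨x - T, by have := (mem_Icc.1 hx).1; omega⟩
  have h₁ := le_windowMax hT hper (s := s) (x := x) (by have := (mem_Icc.1 hx).1; omega)
  have h₂ := le_windowMax hT hper (s := s + T) (x := y + T) (by have := (mem_Icc.1 hy).1; omega)
  rw [hper] at hMx h₂
  omega

omit hT hper in
theorem windowMax_le_succ_add_one (hstep : ∀ x, G x ≤ G (x + 1) + 1) (s : ℕ) :
    windowMax G T s ≤ windowMax G T (s + 1) + 1 := by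
  obtain ⟨x, hx, hMx⟩ := exists_eq_windowMax (G := G) (T := T) s
  have hx := mem_Icc.1 hx
  rw [hMx]
  rcases hx.1.eq_or_lt with rfl | hlt
  · have := le_sup' G (mem_Icc.2 ⟨le_refl (s + 1), Nat.le_add_right (s + 1) T⟩)
    exact (hstep s).trans (by unfold windowMax; omega)
  · have := le_sup' G (mem_Icc.2 (⟨hlt, by omega⟩ : s + 1 ≤ x ∧ x ≤ s + 1 + T))
    exact this.trans (by unfold windowMax; omega)

theorem forall_lt_iff_windowMax_lt (s : ℕ) :
    (∀ x ∈ Ioc s (s + T), G x < G s) ↔ windowMax G T (s + 1) < windowMax G T s := by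
  have hGs : G s ≤ windowMax G T s := le_windowMax hT hper le_rfl
  constructor
  · intro h
    obtain ⟨y, hy, hMy⟩ := exists_eq_windowMax (G := G) (T := T) (s + 1)
    have hy := mem_Icc.1 hy
    rw [hMy]
    by_cases hyT : y ≤ s + T
    · have := h y (mem_Ioc.2 ⟨by omega, hyT⟩)
      omega
    · obtain rfl : y = s + 1 + T := by omega
      have := h (s + 1) (mem_Ioc.2 ⟨by omega, by omega⟩)
      rw [hper]
      omega
  · intro hdrop x hx
    have hx := mem_Ioc.1 hx
    obtain ⟨y, hy, hMy⟩ := exists_eq_windowMax (G := G) (T := T) s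
    have hy := mem_Icc.1 hy
    have hys : y = s := by
      by_contra hne
      have := le_windowMax hT hper (s := s + 1) (x := y) (by omega)
      omega
    have := le_windowMax hT hper (s := s + 1) (x := x) (by omega)
    subst hys
    omega

theorem card_filter_forall_lt_eq_drift (hstep : ∀ x, G x ≤ G (x + 1) + 1) :
    #{s ∈ range T | ∀ x ∈ Ioc s (s + T), G x < G s} = d := by
  have htel : ∑ s ∈ range T, (windowMax G T s - windowMax G T (s + 1)) = d := by
    have := windowMax_add_period hT hper 0
    rw [zero_add] at this
    rw [sum_range_sub', this]
    ring
  have hterm : ∀ s, windowMax G T s - windowMax G T (s + 1) =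
      if ∀ x ∈ Ioc s (s + T), G x < G s then 1 else 0 := by
    intro s
    have h₁ := windowMax_succ_le hT hper s
    have h₂ := windowMax_le_succ_add_one (T := T) hstep s
    by_cases h : ∀ x ∈ Ioc s (s + T), G x < G s
    · have := (forall_lt_iff_windowMax_lt hT hper s).1 h
      rw [if_pos h]
      omega
    · have := mt (forall_lt_iff_windowMax_lt hT hper s).2 h
      rw [if_neg h]
      omega
  rw [sum_congr rfl fun s _ => hterm s, sum_boole] at htel
  exact_mod_cast htel

end CyclicLemma

theorem ZMod.val_eq_iff_eq_natCast {T : ℕ} [NeZero T] (a : ZMod T) {i : ℕ} (hi : i < T) :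
    a.val = i ↔ a = i := by
  constructor
  · rintro rfl
    exact (ZMod.natCast_zmod_val a).symm
  · rintro rfl
    exact ZMod.val_cast_of_lt hi

section Excess

variable {n T : ℕ}

def excess (w : Fin n → ZMod T) (j : ℕ) : ℤ :=
  ∑ r ∈ range j, ((#{m | w m = r} : ℤ) - 1)

theorem sum_card_eq_card_val_sub_lt [NeZero T] (w : Fin n → ZMod T) (s : ℕ) {j : ℕ}
    (hj : j ≤ T) :
    ∑ i ∈ range j, #{m | w m = ((s + i : ℕ) : ZMod T)} = #{m | (w m - s).val < j} := by
  rw [card_eq_sum_card_fiberwise (f := fun m => (w m - s).val) (t := range j)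
    fun m hm => mem_range.2 (mem_filter.1 hm).2]
  refine sum_congr rfl fun i hi => ?_
  have hiT : i < T := (mem_range.1 hi).trans_le hj
  rw [filter_filter]
  refine congrArg card (filter_congr fun m _ => ?_)
  rw [ZMod.val_eq_iff_eq_natCast _ hiT, sub_eq_iff_eq_add, Nat.cast_add, add_comm (s : ZMod T)]
  refine ⟨fun h => ⟨?_, h⟩, And.right⟩
  simpa only [h, add_sub_cancel_right, ZMod.val_cast_of_lt hiT] using mem_range.1 hi

theorem excess_add [NeZero T] (w : Fin n → ZMod T) (s : ℕ) {j : ℕ} (hj : j ≤ T) :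
    excess w (s + j) = excess w s + #{m | (w m - s).val < j} - j := by
  rw [excess, excess, sum_range_add, ← sum_card_eq_card_val_sub_lt w s hj]
  simp only [sum_sub_distrib, sum_const, card_range, nsmul_eq_mul, mul_one, Nat.cast_sum]
  ring

theorem excess_add_period [NeZero T] (hn : n ≤ T) (w : Fin n → ZMod T) (s : ℕ) :
    excess w (s + T) = excess w s - (T - n : ℕ) := by
  have : #{m | (w m - s).val < T} = n := by
    rw [filter_true_of_mem fun m _ => ZMod.val_lt _, card_univ, Fintype.card_fin]
  rw [excess_add w s le_rfl, this]
  push_cast [hn]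
  ring

theorem excess_le_succ_add_one (w : Fin n → ZMod T) (x : ℕ) :
    excess w x ≤ excess w (x + 1) + 1 := by
  rw [excess, excess, sum_range_succ]
  linarith [(#{m | w m = x}).cast_nonneg (α := ℤ)]

end Excess

theorem ZMod.card_filter_eq_card_filter_range {T : ℕ} [NeZero T] (p : ZMod T → Prop)
    [DecidablePred p] : #{c | p c} = #((range T).filter fun s : ℕ => p s) := by
  refine card_nbij' ZMod.val (fun s => (s : ZMod T)) (fun c hc => ?_) (fun s hs => ?_)
    (fun c _ => ZMod.natCast_zmod_val c) (fun s hs => ZMod.val_cast_of_lt ?_)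
  · simpa [ZMod.val_lt] using hc
  · simpa using (mem_filter.1 hs).2
  · exact mem_range.1 (mem_filter.1 hs).1

section CyclicCount

variable {n T : ℕ} [NeZero T]

theorem exists_perm_lt_val_sub_iff (hn : n < T) (w : Fin n → ZMod T) (s : ℕ) :
    (∃ σ : Equiv.Perm (Fin n), ∀ m, (σ m : ℕ) < (w m - s).val) ↔
      ∀ x ∈ Ioc s (s + T), excess w x < excess w s := by
  rw [exists_perm_lt_iff_card_le]
  have hle_eq_lt (j : ℕ) : #{m | (w m - s).val ≤ j} = #{m | (w m - s).val < j + 1} :=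
    congrArg card (filter_congr fun m _ => Nat.lt_succ_iff.symm)
  constructor
  · intro h x hx
    obtain ⟨j, rfl⟩ : ∃ j, x = s + (j + 1) := ⟨x - s - 1, by have := (mem_Ioc.1 hx).1; omega⟩
    have := h j
    rw [hle_eq_lt, ← Nat.cast_le (α := ℤ)] at this
    rw [excess_add w s (by have := (mem_Ioc.1 hx).2; omega)]
    push_cast at this ⊢
    linarith
  · intro h j
    by_cases hj : j < T
    · have := h (s + (j + 1)) (mem_Ioc.2 ⟨by omega, by omega⟩)
      rw [excess_add w s (by omega)] at this
      rw [hle_eq_lt, ← Nat.cast_le (α := ℤ)]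
      push_cast at this ⊢
      linarith
    · calc #{m | (w m - s).val ≤ j} ≤ n := (card_filter_le _ _).trans_eq (card_fin n)
        _ ≤ j := by omega

theorem card_exists_perm_lt_val_sub (hn : n < T) (w : Fin n → ZMod T) :
    #{c : ZMod T | ∃ σ : Equiv.Perm (Fin n), ∀ m, (σ m : ℕ) < (w m - c).val} = T - n := by
  rw [ZMod.card_filter_eq_card_filter_range]
  simp_rw [exists_perm_lt_val_sub_iff hn]
  exact card_filter_forall_lt_eq_drift (NeZero.pos T) (excess_add_period hn.le w)
    (excess_le_succ_add_one w)

theorem card_exists_perm_lt_val (hn₁ : 1 ≤ n) (hn : n < T) :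
    #{w : Fin n → ZMod T | ∃ σ : Equiv.Perm (Fin n), ∀ m, (σ m : ℕ) < (w m).val} =
      (T - n) * T ^ (n - 1) := by
  set P : (Fin n → ZMod T) → Prop := fun w => ∃ σ : Equiv.Perm (Fin n), ∀ m, (σ m : ℕ) < (w m).val
  have hpairs₁ :
      ∑ w : Fin n → ZMod T, #{c : ZMod T | P (fun m => w m - c)} = T ^ n * (T - n) := by
    simp only [P, card_exists_perm_lt_val_sub hn, sum_const, card_univ, Fintype.card_fun,
      ZMod.card, Fintype.card_fin, smul_eq_mul]
  have hpairs₂ :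
      ∑ w : Fin n → ZMod T, #{c : ZMod T | P (fun m => w m - c)} = T * #{w | P w} := by
    simp only [card_filter]
    rw [sum_comm]
    have hshift (c : ZMod T) : ∑ w : Fin n → ZMod T, (if P (fun m => w m - c) then 1 else 0) =
        ∑ w : Fin n → ZMod T, if P w then 1 else 0 :=
      Fintype.sum_equiv (Equiv.subRight fun _ => c) _ _ fun w => rfl
    simp only [hshift, sum_const, card_univ, ZMod.card, smul_eq_mul]
  have : T * #{w | P w} = T * ((T - n) * T ^ (n - 1)) := by
    rw [← hpairs₂, hpairs₁, mul_left_comm, ← pow_succ', Nat.sub_add_cancel hn₁, mul_comm]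
  exact Nat.eq_of_mul_eq_mul_left (NeZero.pos T) this

end CyclicCount

theorem mem_iUnion_image_comp_perm {ι α : Type*} (p : ι → α → Prop) (x : ι → α) :
    x ∈ ⋃ σ : Equiv.Perm ι, (fun j => j ∘ σ) '' {j | ∀ k, p k (j k)} ↔
      ∃ σ : Equiv.Perm ι, ∀ m, p (σ m) (x m) := by
  simp only [Set.mem_iUnion, Set.mem_image, Set.mem_ofPred_eq]
  constructor
  · rintro ⟨σ, j, hj, rfl⟩
    exact ⟨σ, fun m => hj (σ m)⟩
  · rintro ⟨σ, hx⟩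
    refine ⟨σ, x ∘ σ.symm, fun k => ?_, by simp [Function.comp_def]⟩
    simpa using hx (σ.symm k)

theorem iUnion_perm_image_eq_image {n T : ℕ} [NeZero T] :
    ⋃ σ : Equiv.Perm (Fin n), (fun j => j ∘ σ) ''
        {j : Fin n → ℤ | ∀ k : Fin n, 1 ≤ j k ∧ j k ≤ T - ((k.val : ℤ) + 1)} =
      (fun w m => (T : ℤ) - (w m).val) ''
        {w : Fin n → ZMod T | ∃ σ : Equiv.Perm (Fin n), ∀ m, (σ m : ℕ) < (w m).val} := by
  ext x
  refine (mem_iUnion_image_comp_perm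
    (fun (k : Fin n) (v : ℤ) => 1 ≤ v ∧ v ≤ T - ((k.val : ℤ) + 1)) x).trans ?_
  simp only [Set.mem_image, Set.mem_ofPred_eq]
  constructor
  · rintro ⟨σ, hσ⟩
    have hval (m : Fin n) : (((T - x m).toNat : ℕ) : ZMod T).val = (T - x m).toNat :=
      ZMod.val_cast_of_lt (by have := hσ m; omega)
    refine ⟨fun m => ((T - x m).toNat : ZMod T), ⟨σ, fun m => ?_⟩, funext fun m => ?_⟩ <;>
    · rw [hval]
      have := hσ m
      omega
  · rintro ⟨w, ⟨σ, hσ⟩, rfl⟩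
    refine ⟨σ, fun m => ?_⟩
    have := ZMod.val_lt (w m)
    have := hσ m
    dsimp only
    omega

/-- For `n ≥ 1`, `t : ℤ` and
`B_t = {j ∈ ℤ^n | 1 ≤ j_k ≤ t - k for all 1 ≤ k ≤ n}`,
if `t ≥ n+1` then `#(⋃ σ, σ(B_t)) = (t-n)·t^(n-1)`, and if `t ≤ n` the union is empty. -/
theorem stmt_0 (n : ℕ) (hn : 1 ≤ n) (t : ℤ) :
    ((n : ℤ) + 1 ≤ t →
      (((⋃ σ : Equiv.Perm (Fin n), (fun j => j ∘ σ) ''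
          {j : Fin n → ℤ | ∀ k : Fin n, 1 ≤ j k ∧ j k ≤ t - ((k.val : ℤ) + 1)}).ncard : ℤ)
        = (t - (n : ℤ)) * t ^ (n - 1))) ∧
    (t ≤ (n : ℤ) →
      (⋃ σ : Equiv.Perm (Fin n), (fun j => j ∘ σ) ''
          {j : Fin n → ℤ | ∀ k : Fin n, 1 ≤ j k ∧ j k ≤ t - ((k.val : ℤ) + 1)}) = ∅) := by
  refine ⟨fun ht => ?_, fun ht => Set.eq_empty_of_forall_notMem fun x hx => ?_⟩
  · lift t to ℕ using by omega
    have : NeZero t := ⟨by omega⟩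
    have hinj : Function.Injective fun (w : Fin n → ZMod t) m => (t : ℤ) - (w m).val :=
      fun w w' h => funext fun m => ZMod.val_injective t <| by
        have := congrFun h m
        dsimp only at this
        omega
    rw [iUnion_perm_image_eq_image, Set.ncard_image_of_injective _ hinj, ← coe_filter_univ,
      Set.ncard_coe_finset, card_exists_perm_lt_val hn (by omega)]
    push_cast [show n ≤ t by omega]
    rfl
  · obtain ⟨σ, hσ⟩ := (mem_iUnion_image_comp_perm
      (fun (k : Fin n) (v : ℤ) => 1 ≤ v ∧ v ≤ t - ((k.val : ℤ) + 1)) x).1 hx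
    have := hσ (σ.symm ⟨n - 1, by omega⟩)
    simp only [Equiv.apply_symm_apply] at this
    omega
end

section
/- Let q ≥ 3 be a prime power. The number of pairs (t_1,t_2) of positive integers such that, for k = 1 and k = 2, (q+1)·⌈(t_k − t_s)/(q+1)⌉ + (q+1)·(q−2)·⌈t_k/(q+1)⌉ > q·t_k (where s is the other index), equals q(q−1)(q−2)(q+3)/12. -/
lemma ceil_aux (q : ℕ) (k e : ℤ) (x : ℚ) (hx : x = ((((q:ℤ)+1)*k + e : ℤ) : ℚ))
    (h1 : -((q:ℤ)+1) < e) (h2 : e ≤ 0) : ⌈x/((q:ℚ)+1)⌉ = k := by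
  have hq1 : (0:ℚ) < (q:ℚ)+1 := by positivity
  rw [Int.ceil_eq_iff]
  constructor
  · rw [lt_div_iff₀ hq1, hx]
    have h1' : -((q:ℚ)+1) < (e:ℚ) := by exact_mod_cast h1
    push_cast
    nlinarith
  · rw [div_le_iff₀ hq1, hx]
    have h2' : (e:ℚ) ≤ 0 := by exact_mod_cast h2
    push_cast
    nlinarith

lemma div_unique (Q a r a' r' : ℤ) (hQ : 0 < Q) (h : (Q+1)*a + r = (Q+1)*a' + r')
    (hr : 1 ≤ r) (hr2 : r ≤ Q) (hr' : 1 ≤ r') (hr2' : r' ≤ Q) : a = a' ∧ r = r' := by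
  have h3 : (Q+1)*(a - a') = r' - r := by ring_nf; linarith
  have ha1 : a - a' < 1 := by by_contra hc; push_neg at hc; nlinarith
  have ha2 : -1 < a - a' := by by_contra hc; push_neg at hc; nlinarith
  have h4 : a = a' := by clear h3 h; omega
  exact ⟨h4, by rw [h4] at h; linarith⟩

lemma gsum (k : ℕ) : 12 * (∑ j ∈ Finset.range k, ((j:ℤ)^2 + 2*j)) = 2*k*(k-1)*(2*(k:ℤ)+5) := by
  induction k with
  | zero => simp
  | succ n ih =>
    rw [Finset.sum_range_succ]
    push_cast
    push_cast at ih
    linear_combination ih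

lemma hsum (m : ℕ) :
    12 * (∑ n ∈ Finset.range m, ∑ j ∈ Finset.range (n+1), ((j:ℤ)^2 + 2*j))
      = ((m:ℤ)+1)*m*((m:ℤ)-1)*((m:ℤ)+4) := by
  induction m with
  | zero => simp
  | succ n ih =>
    rw [Finset.sum_range_succ, mul_add, ih, gsum (n+1)]
    push_cast
    ring

lemma sumB (m k : ℕ) (hk : k ≤ m) :
    ∑ b ∈ Finset.range m, ((k - b)*(k - b) - 1)
      = ∑ j ∈ Finset.range k, ((j+1)*(j+1) - 1) := by
  have h1 : ∑ b ∈ Finset.range m, ((k - b)*(k - b) - 1)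
      = ∑ b ∈ Finset.range k, ((k - b)*(k - b) - 1) := by
    refine (Finset.sum_subset (Finset.range_subset_range.2 hk) ?_).symm
    intro b _ hb
    simp only [Finset.mem_range, not_lt] at hb
    have : k - b = 0 := by omega
    simp [this]
  rw [h1, ← Finset.sum_range_reflect (fun b => (k - b)*(k - b) - 1) k]
  apply Finset.sum_congr rfl
  intro j hj
  simp only [Finset.mem_range] at hj
  have : k - (k - 1 - j) = j + 1 := by omega
  simp only [this]

lemma sumC (m : ℕ) :
    ∑ a ∈ Finset.range m, (∑ j ∈ Finset.range (m - a), ((j+1)*(j+1) - 1))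
      = ∑ n ∈ Finset.range m, ∑ j ∈ Finset.range (n+1), ((j+1)*(j+1) - 1) := by
  rw [← Finset.sum_range_reflect (fun n => ∑ j ∈ Finset.range (n+1), ((j+1)*(j+1) - 1)) m]
  apply Finset.sum_congr rfl
  intro a ha
  simp only [Finset.mem_range] at ha
  have : m - 1 - a + 1 = m - a := by omega
  simp only [this]

lemma cond_iff (q : ℕ) (hq3 : 3 ≤ q) (a b r s : ℤ)
    (hr : 1 ≤ r) (hr2 : r ≤ (q:ℤ)+1) (hs : 1 ≤ s) (hs2 : s ≤ (q:ℤ)+1) :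
    ((q:ℤ)+1) * ⌈((((((q:ℤ)+1)*a+r : ℤ)) : ℚ) - (((((q:ℤ)+1)*b+s : ℤ)) : ℚ)) / ((q:ℚ)+1)⌉
      + ((q:ℤ)+1) * ((q:ℤ)-2) * ⌈(((((q:ℤ)+1)*a+r : ℤ)) : ℚ) / ((q:ℚ)+1)⌉
      > (q:ℤ) * (((q:ℤ)+1)*a+r)
    ↔ (q:ℤ)*r < ((q:ℤ)+1)*((q:ℤ)-2-a-b + if s < r then 1 else 0) := by
  have hc1 : ⌈(((((q:ℤ)+1)*a+r : ℤ)) : ℚ) / ((q:ℚ)+1)⌉ = a + 1 :=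
    ceil_aux q (a+1) (r - ((q:ℤ)+1)) _ (by push_cast; ring) (by omega) (by omega)
  have hc2 : ⌈((((((q:ℤ)+1)*a+r : ℤ)) : ℚ) - (((((q:ℤ)+1)*b+s : ℤ)) : ℚ)) / ((q:ℚ)+1)⌉
      = a - b + (if s < r then 1 else 0) := by
    split_ifs with h
    · refine ceil_aux q (a-b+1) (r - s - ((q:ℤ)+1)) _ ?_ (by omega) (by omega)
      push_cast; ring
    · rw [show a - b + (0:ℤ) = a - b by ring]
      refine ceil_aux q (a-b) (r - s) _ ?_ (by omega) (by omega)
      push_cast; ring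
  rw [hc1, hc2]
  have key : ((q:ℤ)+1) * (a - b + (if s < r then 1 else 0)) + ((q:ℤ)+1)*((q:ℤ)-2)*(a+1)
      - (q:ℤ) * (((q:ℤ)+1)*a+r)
      = ((q:ℤ)+1)*((q:ℤ)-2-a-b + if s < r then 1 else 0) - (q:ℤ)*r := by ring
  constructor <;> intro h <;> linarith

lemma pair_iff (q : ℕ) (hq3 : 3 ≤ q) (a b r s : ℤ) (ha : 0 ≤ a) (hb : 0 ≤ b)
    (hr : 1 ≤ r) (hs : 1 ≤ s) :
    (((q:ℤ)*r < ((q:ℤ)+1)*((q:ℤ)-2-a-b + if s < r then 1 else 0)) ∧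
     ((q:ℤ)*s < ((q:ℤ)+1)*((q:ℤ)-2-a-b + if r < s then 1 else 0)))
    ↔ (r ≤ (q:ℤ)-1-a-b ∧ s ≤ (q:ℤ)-1-a-b
        ∧ ¬(r = (q:ℤ)-1-a-b ∧ s = (q:ℤ)-1-a-b)) := by
  have hQ : (3:ℤ) ≤ (q:ℤ) := by exact_mod_cast hq3
  constructor
  · rintro ⟨h1, h2⟩
    rcases lt_trichotomy r s with hlt | heq | hgt
    · rw [if_neg (by omega : ¬ s < r), add_zero] at h1
      rw [if_pos hlt] at h2
      have hs3 : s ≤ (q:ℤ)-1-a-b := by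
        by_contra hcon; push_neg at hcon
        nlinarith [mul_le_mul_of_nonneg_left (show (q:ℤ)-a-b ≤ s by omega)
          (show (0:ℤ) ≤ (q:ℤ) by omega)]
      exact ⟨by omega, hs3, by rintro ⟨hh, hh'⟩; omega⟩
    · rw [if_neg (by omega : ¬ s < r), add_zero] at h1
      have hr3 : r ≤ (q:ℤ)-2-a-b := by
        by_contra hcon; push_neg at hcon
        nlinarith [mul_le_mul_of_nonneg_left (show (q:ℤ)-1-a-b ≤ r by omega)
          (show (0:ℤ) ≤ (q:ℤ) by omega)]
      exact ⟨by omega, by omega, by rintro ⟨hh, hh'⟩; omega⟩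
    · rw [if_pos hgt] at h1
      rw [if_neg (by omega : ¬ r < s), add_zero] at h2
      have hr3 : r ≤ (q:ℤ)-1-a-b := by
        by_contra hcon; push_neg at hcon
        nlinarith [mul_le_mul_of_nonneg_left (show (q:ℤ)-a-b ≤ r by omega)
          (show (0:ℤ) ≤ (q:ℤ) by omega)]
      exact ⟨hr3, by omega, by rintro ⟨hh, hh'⟩; omega⟩
  · rintro ⟨h1, h2, h3⟩
    have hc1 : (1:ℤ) ≤ (q:ℤ)-1-a-b := by omega
    constructor
    · split_ifs with h
      · nlinarith [mul_le_mul_of_nonneg_left h1 (show (0:ℤ) ≤ (q:ℤ) by omega)]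
      · have hr3 : r ≤ (q:ℤ)-2-a-b := by omega
        nlinarith [mul_le_mul_of_nonneg_left hr3 (show (0:ℤ) ≤ (q:ℤ) by omega)]
    · split_ifs with h
      · nlinarith [mul_le_mul_of_nonneg_left h2 (show (0:ℤ) ≤ (q:ℤ) by omega)]
      · have hs3 : s ≤ (q:ℤ)-2-a-b := by omega
        nlinarith [mul_le_mul_of_nonneg_left hs3 (show (0:ℤ) ≤ (q:ℤ) by omega)]

/-- For a prime power `q ≥ 3`, the number of Hermitian pure gap pairs equals
`q(q-1)(q-2)(q+3)/12` (stated multiplied through by 12). -/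
theorem stmt_3 (q : ℕ) (hq : IsPrimePow q) (hq3 : 3 ≤ q) :
    12 * (({p : ℤ × ℤ | 1 ≤ p.1 ∧ 1 ≤ p.2 ∧
        (((q : ℤ) + 1) * ⌈((p.1 : ℚ) - (p.2 : ℚ)) / ((q : ℚ) + 1)⌉
          + ((q : ℤ) + 1) * ((q : ℤ) - 2) * ⌈(p.1 : ℚ) / ((q : ℚ) + 1)⌉ > (q : ℤ) * p.1) ∧
        (((q : ℤ) + 1) * ⌈((p.2 : ℚ) - (p.1 : ℚ)) / ((q : ℚ) + 1)⌉
          + ((q : ℤ) + 1) * ((q : ℤ) - 2) * ⌈(p.2 : ℚ) / ((q : ℚ) + 1)⌉ > (q : ℤ) * p.2)}).ncard : ℤ)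
      = (q : ℤ) * ((q : ℤ) - 1) * ((q : ℤ) - 2) * ((q : ℤ) + 3) := by
  classical
  have hQ3 : (3:ℤ) ≤ (q:ℤ) := by exact_mod_cast hq3
  set c : ℕ × ℕ → ℤ := fun ab => (q:ℤ) - 1 - ab.1 - ab.2 with hcdef
  set E : ℕ × ℕ → Finset (ℤ × ℤ) :=
    fun ab => (Finset.Icc 1 (c ab) ×ˢ Finset.Icc 1 (c ab)).erase (c ab, c ab) with hEdef
  set g : ℕ × ℕ → ℤ × ℤ → ℤ × ℤ :=
    fun ab rs => (((q:ℤ)+1)*ab.1 + rs.1, ((q:ℤ)+1)*ab.2 + rs.2) with hgdef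
  set F : Finset (ℤ × ℤ) :=
    (Finset.range (q-1) ×ˢ Finset.range (q-1)).biUnion (fun ab => (E ab).image (g ab)) with hFdef
  -- basic facts about E membership
  have hEmem : ∀ ab : ℕ × ℕ, ∀ rs : ℤ × ℤ, rs ∈ E ab ↔
      (1 ≤ rs.1 ∧ rs.1 ≤ c ab ∧ 1 ≤ rs.2 ∧ rs.2 ≤ c ab ∧ ¬(rs.1 = c ab ∧ rs.2 = c ab)) := by
    intro ab rs
    simp only [hEdef, Finset.mem_erase, Finset.mem_product, Finset.mem_Icc]
    constructor
    · rintro ⟨hne, ⟨h1, h2⟩, h3, h4⟩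
      exact ⟨h1, h2, h3, h4, fun he => hne (Prod.ext_iff.mpr he)⟩
    · rintro ⟨h1, h2, h3, h4, hne⟩
      exact ⟨fun he => hne ⟨congrArg Prod.fst he, congrArg Prod.snd he⟩, ⟨h1, h2⟩, h3, h4⟩
  -- Step A : set = coe F
  have hSF : {p : ℤ × ℤ | 1 ≤ p.1 ∧ 1 ≤ p.2 ∧
        (((q : ℤ) + 1) * ⌈((p.1 : ℚ) - (p.2 : ℚ)) / ((q : ℚ) + 1)⌉
          + ((q : ℤ) + 1) * ((q : ℤ) - 2) * ⌈(p.1 : ℚ) / ((q : ℚ) + 1)⌉ > (q : ℤ) * p.1) ∧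
        (((q : ℤ) + 1) * ⌈((p.2 : ℚ) - (p.1 : ℚ)) / ((q : ℚ) + 1)⌉
          + ((q : ℤ) + 1) * ((q : ℤ) - 2) * ⌈(p.2 : ℚ) / ((q : ℚ) + 1)⌉ > (q : ℤ) * p.2)}
      = ↑F := by
    ext p
    obtain ⟨t1, t2⟩ := p
    simp only [Set.mem_setOf_eq, Finset.coe_biUnion, Finset.mem_coe, Finset.mem_biUnion,
      Finset.mem_product, Finset.mem_range, Finset.mem_image, Set.mem_iUnion, hFdef]
    constructor
    · rintro ⟨ht1, ht2, hcond1, hcond2⟩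
      -- decompose t1, t2
      have hQpos : (0:ℤ) < (q:ℤ)+1 := by omega
      set a : ℤ := (t1-1) / ((q:ℤ)+1) with hadef
      set b : ℤ := (t2-1) / ((q:ℤ)+1) with hbdef
      set r : ℤ := t1 - ((q:ℤ)+1)*a with hrdef
      set s : ℤ := t2 - ((q:ℤ)+1)*b with hsdef
      have hda := Int.mul_ediv_add_emod (t1-1) ((q:ℤ)+1)
      have hdb := Int.mul_ediv_add_emod (t2-1) ((q:ℤ)+1)
      have hma := Int.emod_nonneg (t1-1) (by omega : ((q:ℤ)+1) ≠ 0)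
      have hma2 := Int.emod_lt_of_pos (t1-1) hQpos
      have hmb := Int.emod_nonneg (t2-1) (by omega : ((q:ℤ)+1) ≠ 0)
      have hmb2 := Int.emod_lt_of_pos (t2-1) hQpos
      have hr1 : 1 ≤ r := by rw [hrdef, hadef]; linarith [hda, hma]
      have hr2 : r ≤ (q:ℤ)+1 := by rw [hrdef, hadef]; linarith [hda, hma2]
      have hs1 : 1 ≤ s := by rw [hsdef, hbdef]; linarith [hdb, hmb]
      have hs2 : s ≤ (q:ℤ)+1 := by rw [hsdef, hbdef]; linarith [hdb, hmb2]
      have ha0 : 0 ≤ a := Int.ediv_nonneg (by omega) (by omega)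
      have hb0 : 0 ≤ b := Int.ediv_nonneg (by omega) (by omega)
      have ht1eq : t1 = ((q:ℤ)+1)*a + r := by rw [hrdef]; ring
      have ht2eq : t2 = ((q:ℤ)+1)*b + s := by rw [hsdef]; ring
      rw [ht1eq, ht2eq] at hcond1 hcond2
      rw [cond_iff q hq3 a b r s hr1 hr2 hs1 hs2] at hcond1
      rw [cond_iff q hq3 b a s r hs1 hs2 hr1 hr2] at hcond2
      have hiff := (pair_iff q hq3 a b r s ha0 hb0 hr1 hs1).1
        ⟨by linarith [hcond1], by
          have : (q:ℤ)-2-b-a = (q:ℤ)-2-a-b := by ring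
          rw [this] at hcond2; exact hcond2⟩
      obtain ⟨hrc, hsc, hne⟩ := hiff
      refine ⟨(a.toNat, b.toNat), ⟨?_, ?_⟩, (r, s), ?_, ?_⟩
      · have : (a.toNat : ℤ) = a := Int.toNat_of_nonneg ha0
        omega
      · have : (b.toNat : ℤ) = b := Int.toNat_of_nonneg hb0
        omega
      · rw [hEmem]
        have hca : c (a.toNat, b.toNat) = (q:ℤ) - 1 - a - b := by
          simp only [hcdef]
          rw [Int.toNat_of_nonneg ha0, Int.toNat_of_nonneg hb0]
        rw [hca]
        exact ⟨hr1, hrc, hs1, hsc, hne⟩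
      · simp only [hgdef]
        rw [Int.toNat_of_nonneg ha0, Int.toNat_of_nonneg hb0]
        rw [ht1eq, ht2eq]
    · rintro ⟨⟨a, b⟩, ⟨ha, hb⟩, ⟨r, s⟩, hrs, hp⟩
      rw [hEmem] at hrs
      obtain ⟨hr1, hrc, hs1, hsc, hne⟩ := hrs
      simp only [hcdef] at hrc hsc hne
      have hc2 : ((q:ℤ) - 1 - a - b) ≤ (q:ℤ) - 1 := by
        have : (0:ℤ) ≤ (a:ℤ) := Int.natCast_nonneg a
        have : (0:ℤ) ≤ (b:ℤ) := Int.natCast_nonneg b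
        omega
      have hr2 : r ≤ (q:ℤ)+1 := by omega
      have hs2 : s ≤ (q:ℤ)+1 := by omega
      have ha0 : (0:ℤ) ≤ (a:ℤ) := Int.natCast_nonneg a
      have hb0 : (0:ℤ) ≤ (b:ℤ) := Int.natCast_nonneg b
      simp only [hgdef, Prod.mk.injEq] at hp
      have hp1 : t1 = ((q:ℤ)+1)*a + r := hp.1.symm
      have hp2 : t2 = ((q:ℤ)+1)*b + s := hp.2.symm
      have hconds := (pair_iff q hq3 a b r s ha0 hb0 hr1 hs1).2 ⟨hrc, hsc, hne⟩
      have hmn1 := mul_nonneg (show (0:ℤ) ≤ (q:ℤ)+1 by omega) ha0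
      have hmn2 := mul_nonneg (show (0:ℤ) ≤ (q:ℤ)+1 by omega) hb0
      refine ⟨by rw [hp1]; linarith, by rw [hp2]; linarith, ?_, ?_⟩
      · rw [hp1, hp2, cond_iff q hq3 a b r s hr1 hr2 hs1 hs2]
        exact hconds.1
      · rw [hp1, hp2, cond_iff q hq3 b a s r hs1 hs2 hr1 hr2]
        have : (q:ℤ)-2-b-a = (q:ℤ)-2-a-b := by ring
        rw [this]
        exact hconds.2
  rw [hSF, Set.ncard_coe_finset]
  -- Step B : count F
  have hdisj : ∀ x ∈ Finset.range (q-1) ×ˢ Finset.range (q-1),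
      ∀ y ∈ Finset.range (q-1) ×ˢ Finset.range (q-1), x ≠ y →
      Disjoint ((E x).image (g x)) ((E y).image (g y)) := by
    intro x hx y hy hxy
    rw [Finset.disjoint_left]
    rintro p hp hp'
    simp only [Finset.mem_image] at hp hp'
    obtain ⟨rs, hrs, hgp⟩ := hp
    obtain ⟨rs', hrs', hgp'⟩ := hp'
    rw [hEmem] at hrs hrs'
    have hcx : c x ≤ (q:ℤ) := by
      simp only [hcdef]
      have := Int.natCast_nonneg x.1; have := Int.natCast_nonneg x.2; omega
    have hcy : c y ≤ (q:ℤ) := by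
      simp only [hcdef]
      have := Int.natCast_nonneg y.1; have := Int.natCast_nonneg y.2; omega
    have hgp1 := congrArg Prod.fst hgp
    have hgp1' := congrArg Prod.fst hgp'
    have hgp2 := congrArg Prod.snd hgp
    have hgp2' := congrArg Prod.snd hgp'
    simp only [hgdef] at hgp1 hgp1' hgp2 hgp2'
    have h1 : ((q:ℤ)+1)*x.1 + rs.1 = ((q:ℤ)+1)*y.1 + rs'.1 := by
      rw [hgp1, ← hgp1']
    have h2 : ((q:ℤ)+1)*x.2 + rs.2 = ((q:ℤ)+1)*y.2 + rs'.2 := by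
      rw [hgp2, ← hgp2']
    have e1 := div_unique (q:ℤ) x.1 rs.1 y.1 rs'.1 (by omega) h1 hrs.1 (by omega)
      hrs'.1 (by omega)
    have e2 := div_unique (q:ℤ) x.2 rs.2 y.2 rs'.2 (by omega) h2 hrs.2.2.1 (by omega)
      hrs'.2.2.1 (by omega)
    apply hxy
    have : (x.1 : ℤ) = y.1 := e1.1
    have : (x.2 : ℤ) = y.2 := e2.1
    ext <;> omega
  rw [hFdef, Finset.card_biUnion hdisj]
  have hcardim : ∀ ab : ℕ × ℕ, ((E ab).image (g ab)).card = (E ab).card := by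
    intro ab
    apply Finset.card_image_of_injOn
    intro x hx y hy hxy
    simp only [hgdef, Prod.ext_iff] at hxy
    have : x.1 = y.1 := by omega
    have : x.2 = y.2 := by omega
    ext <;> omega
  have hcardE : ∀ ab : ℕ × ℕ, (E ab).card = (c ab).toNat * (c ab).toNat - 1 := by
    intro ab
    rw [hEdef]
    simp only
    rw [Finset.card_erase_eq_ite]
    rw [Finset.card_product, Int.card_Icc]
    have hsimp : ((c ab) + 1 - 1).toNat = (c ab).toNat := by omega
    rw [hsimp]
    split_ifs with h
    · rfl
    · by_cases hc1 : 1 ≤ c ab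
      · exfalso
        apply h
        simp only [Finset.mem_product, Finset.mem_Icc]
        omega
      · have : (c ab).toNat = 0 := by omega
        rw [this]
  calc 12 * ((∑ ab ∈ Finset.range (q-1) ×ˢ Finset.range (q-1), ((E ab).image (g ab)).card : ℕ) : ℤ)
      = 12 * ((∑ n ∈ Finset.range (q-1), ∑ j ∈ Finset.range (n+1), (j^2+2*j) : ℕ) : ℤ) := by
        congr 2
        rw [Finset.sum_product]
        have step1 : ∀ a ∈ Finset.range (q-1),
            ∑ b ∈ Finset.range (q-1), ((E (a,b)).image (g (a,b))).card
            = ∑ j ∈ Finset.range (q-1-a), ((j+1)*(j+1) - 1) := by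
          intro a ha
          rw [← sumB (q-1) (q-1-a) (by omega)]
          apply Finset.sum_congr rfl
          intro b hb
          rw [hcardim, hcardE]
          have : (c (a,b)).toNat = q-1-a-b := by
            simp only [hcdef]
            omega
          rw [this]
        rw [Finset.sum_congr rfl step1, sumC (q-1)]
        apply Finset.sum_congr rfl
        intro n hn
        apply Finset.sum_congr rfl
        intro j hj
        have : (j+1)*(j+1) = j^2 + 2*j + 1 := by ring
        omega
    _ = (q : ℤ) * ((q : ℤ) - 1) * ((q : ℤ) - 2) * ((q : ℤ) + 3) := by
        rw [show ((∑ n ∈ Finset.range (q-1), ∑ j ∈ Finset.range (n+1), (j^2+2*j) : ℕ) : ℤ)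
            = ∑ n ∈ Finset.range (q-1), ∑ j ∈ Finset.range (n+1), ((j:ℤ)^2+2*j) by
          push_cast; rfl]
        rw [hsum (q-1)]
        have hcast : ((q-1 : ℕ) : ℤ) = (q:ℤ) - 1 := by omega
        rw [hcast]
        ring
end

section
/- Let q be a prime power and 2 ≤ n an integer. An n-tuple (t_1,…,t_n) of positive integers is a Hermitian pure gap tuple if and only if there exist nonnegative integers i_1,…,i_n with A := i_1 + ⋯ + i_n ≤ q−n−1, a permutation σ of {1,…,n}, and integers j_1,…,j_n with 1 ≤ j_k ≤ q−A−k for all 1 ≤ k ≤ n, such that t_l = (q+1)·i_l + j_{σ(l)} for every l ∈ {1,…,n}. -/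
open Finset

private lemma pg4_ceil_div_eq (Q : ℤ) (hQ : 0 < Q) (a z : ℤ) (h1 : Q*(z-1) < a)
    (h2 : a ≤ Q*z) : ⌈(a:ℚ)/(Q:ℚ)⌉ = z := by
  have hQ' : (0:ℚ) < (Q:ℚ) := by exact_mod_cast hQ
  have h1' : (Q:ℚ)*((z:ℚ)-1) < (a:ℚ) := by exact_mod_cast h1
  have h2' : (a:ℚ) ≤ (Q:ℚ)*(z:ℚ) := by exact_mod_cast h2
  rw [Int.ceil_eq_iff]
  constructor
  · rw [lt_div_iff₀ hQ']; nlinarith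
  · rw [div_le_iff₀ hQ']; nlinarith

private lemma pg4_card_filter_perm {n : ℕ} (σ : Equiv.Perm (Fin n)) (p : Fin n → Prop)
    [DecidablePred p] :
    (univ.filter fun s => p (σ s)).card = (univ.filter p).card := by
  rw [← Fintype.card_subtype, ← Fintype.card_subtype]
  exact Fintype.card_congr (σ.subtypeEquiv fun a => Iff.rfl)

private lemma pg4_key_ineq (q r m : ℤ) (hq : 1 ≤ q) (hr : 1 ≤ r) (hm : m ≤ q - 1) :
    (q+1)*m > q*r ↔ r ≤ m := by
  constructor
  · intro h; nlinarith
  · intro h; nlinarith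

/-- For a prime power `q` and `n ≥ 2`, an `n`-tuple of positive integers is a
Hermitian pure gap tuple iff it has the form `t_l = (q+1)·i_l + j_{σ(l)}` with
`i_l ≥ 0`, `A = Σ i_l ≤ q-n-1`, `σ` a permutation, and `1 ≤ j_k ≤ q-A-k`. -/
theorem stmt_4 (q n : ℕ) (hq : IsPrimePow q) (hn : 2 ≤ n)
    (t : Fin n → ℤ) (ht : ∀ l, 1 ≤ t l) :
    (∀ k : Fin n,
        ((q : ℤ) + 1) * (∑ s ∈ Finset.univ.erase k,
            ⌈((t k : ℚ) - (t s : ℚ)) / ((q : ℚ) + 1)⌉)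
          + ((q : ℤ) + 1) * ((q : ℤ) - (n : ℤ)) * ⌈(t k : ℚ) / ((q : ℚ) + 1)⌉
          > (q : ℤ) * t k)
      ↔ ∃ (i : Fin n → ℤ) (σ : Equiv.Perm (Fin n)) (j : Fin n → ℤ),
          (∀ k, 0 ≤ i k) ∧ (∑ k, i k) ≤ (q : ℤ) - (n : ℤ) - 1 ∧
          (∀ k : Fin n, 1 ≤ j k ∧ j k ≤ (q : ℤ) - (∑ l, i l) - ((k.val : ℤ) + 1)) ∧
          (∀ l : Fin n, t l = ((q : ℤ) + 1) * i l + j (σ l)) := by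
  classical
  have hq2 : 2 ≤ q := hq.two_le
  set Q : ℤ := (q:ℤ) + 1 with hQdef
  have hQpos : (0:ℤ) < Q := by positivity
  have hcastQ : ((q:ℚ) + 1) = ((Q:ℤ):ℚ) := by push_cast [hQdef]; ring
  set i : Fin n → ℤ := fun l => (t l - 1) / Q with hidef
  set r : Fin n → ℤ := fun l => (t l - 1) % Q + 1 with hrdef
  have hdecomp : ∀ l, t l = Q * i l + r l := by
    intro l
    have := Int.mul_ediv_add_emod (t l - 1) Q
    simp only [hidef, hrdef]
    omega
  have hr1 : ∀ l, 1 ≤ r l := by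
    intro l
    have := Int.emod_nonneg (t l - 1) (by omega : Q ≠ 0)
    simp only [hrdef]; omega
  have hrQ : ∀ l, r l ≤ Q := by
    intro l
    have := Int.emod_lt_of_pos (t l - 1) hQpos
    simp only [hrdef]; omega
  have hi0 : ∀ l, 0 ≤ i l := by
    intro l
    exact Int.ediv_nonneg (by have := ht l; omega) (le_of_lt hQpos)
  set A : ℤ := ∑ l, i l with hAdef
  have hA0 : 0 ≤ A := Finset.sum_nonneg fun l _ => hi0 l
  set N : Fin n → ℤ := fun l => (((univ.filter fun s => r s < r l).card : ℤ)) with hNdef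
  have hNle : ∀ l, N l ≤ (n:ℤ) - 1 := by
    intro l
    have hsub : (univ.filter fun s => r s < r l) ⊆ univ.erase l := by
      intro s hs
      simp only [Finset.mem_filter] at hs
      refine Finset.mem_erase.2 ⟨?_, Finset.mem_univ s⟩
      rintro rfl; exact lt_irrefl _ hs.2
    have := Finset.card_le_card hsub
    rw [Finset.card_erase_of_mem (Finset.mem_univ l), Finset.card_univ, Fintype.card_fin] at this
    simp only [hNdef]
    have h1n : 1 ≤ n := by omega
    omega
  -- Step 1: reduce the gap condition to `r k ≤ q - n - A + N k`
  have hmain : (∀ k : Fin n,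
        ((q : ℤ) + 1) * (∑ s ∈ Finset.univ.erase k,
            ⌈((t k : ℚ) - (t s : ℚ)) / ((q : ℚ) + 1)⌉)
          + ((q : ℤ) + 1) * ((q : ℤ) - (n : ℤ)) * ⌈(t k : ℚ) / ((q : ℚ) + 1)⌉
          > (q : ℤ) * t k)
      ↔ ∀ k : Fin n, r k ≤ (q:ℤ) - (n:ℤ) - A + N k := by
    apply forall_congr'
    intro k
    have hc1 : ⌈(t k : ℚ) / ((q:ℚ)+1)⌉ = i k + 1 := by
      rw [hcastQ]
      apply pg4_ceil_div_eq Q hQpos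
      · have := hdecomp k; have := hr1 k; nlinarith
      · have := hdecomp k; have := hrQ k; nlinarith
    have hc2 : ∀ s : Fin n, ⌈((t k : ℚ) - (t s : ℚ)) / ((q:ℚ)+1)⌉
        = i k - i s + (if r s < r k then (1:ℤ) else 0) := by
      intro s
      have hcast2 : ((t k : ℚ) - (t s : ℚ)) = (((t k - t s : ℤ)):ℚ) := by push_cast; ring
      rw [hcast2, hcastQ]
      have hdk := hdecomp k
      have hds := hdecomp s
      have h1k := hr1 k
      have h1s := hr1 s
      have hQk := hrQ k
      have hQs := hrQ s
      split_ifs with hlt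
      · apply pg4_ceil_div_eq Q hQpos <;> nlinarith
      · apply pg4_ceil_div_eq Q hQpos <;> nlinarith
    have hsum : (∑ s ∈ univ.erase k, ⌈((t k : ℚ) - (t s : ℚ)) / ((q:ℚ)+1)⌉)
        = (n:ℤ) * i k - A + N k := by
      rw [Finset.sum_congr rfl (fun s _ => hc2 s), Finset.sum_add_distrib]
      have e1 : ∑ s ∈ univ.erase k, (i k - i s) = (n:ℤ) * i k - A := by
        rw [Finset.sum_sub_distrib, Finset.sum_const,
          Finset.sum_erase_eq_sub (Finset.mem_univ k),
          Finset.card_erase_of_mem (Finset.mem_univ k), Finset.card_univ, Fintype.card_fin,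
          nsmul_eq_mul]
        have hc : ((n-1:ℕ):ℤ) = (n:ℤ) - 1 := by omega
        rw [hc, ← hAdef]
        ring
      have e2 : ∑ s ∈ univ.erase k, (if r s < r k then (1:ℤ) else 0) = N k := by
        rw [Finset.sum_erase _ (by simp)]
        simp [hNdef, Finset.sum_boole]
      rw [e1, e2]
    rw [hsum, hc1]
    have iden : Q * ((n:ℤ) * i k - A + N k) + Q * ((q:ℤ) - (n:ℤ)) * (i k + 1)
        = Q * ((q:ℤ) - (n:ℤ) - A + N k) + (q:ℤ) * (Q * i k) := by ring
    have hkey := pg4_key_ineq (q:ℤ) (r k) ((q:ℤ) - (n:ℤ) - A + N k)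
      (by exact_mod_cast Nat.one_le_of_lt hq2) (hr1 k)
      (by have := hNle k; have := hA0; omega)
    constructor
    · intro h
      rw [← hkey]
      have hd := hdecomp k
      simp only [hQdef] at *
      nlinarith
    · intro h
      rw [← hkey] at h
      have hd := hdecomp k
      simp only [hQdef] at *
      nlinarith
  rw [hmain]
  constructor
  · -- forward: construct i, σ, j
    intro hcond
    have hne : (univ : Finset (Fin n)).Nonempty := by
      have : (0:ℕ) < n := by omega
      exact ⟨⟨0, this⟩, Finset.mem_univ _⟩
    obtain ⟨l₀, -, hl₀⟩ := Finset.exists_min_image univ r hne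
    have hN₀ : N l₀ = 0 := by
      simp only [hNdef, Nat.cast_eq_zero, Finset.card_eq_zero]
      apply Finset.filter_false_of_mem
      intro s _
      exact not_lt.2 (hl₀ s (Finset.mem_univ s))
    have hA : A ≤ (q:ℤ) - (n:ℤ) - 1 := by
      have := hcond l₀
      rw [hN₀] at this
      have := hr1 l₀
      omega
    set τ : Equiv.Perm (Fin n) := Tuple.sort r with hτ
    have hmono : Monotone (r ∘ τ) := Tuple.monotone_sort r
    set j : Fin n → ℤ := fun k => r (τ (Fin.rev k)) with hjdef
    set σ : Equiv.Perm (Fin n) := τ.symm.trans Fin.revPerm with hσdef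
    have hjσ : ∀ l, j (σ l) = r l := by
      intro l
      simp [hjdef, hσdef, Fin.rev_rev]
    have hjanti : ∀ k m : Fin n, k ≤ m → j m ≤ j k := by
      intro k m hkm
      exact hmono (Fin.rev_le_rev.2 hkm)
    refine ⟨i, σ, j, hi0, hA, ?_, ?_⟩
    · intro k
      refine ⟨hr1 _, ?_⟩
      set l : Fin n := τ (Fin.rev k) with hl
      have hjl : j k = r l := rfl
      have hσl : σ l = k := by simp [hσdef, hl, Fin.rev_rev]
      -- N l ≤ n - 1 - k
      have hNcard : N l = (((univ.filter fun m => j m < j k).card : ℤ)) := by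
        simp only [hNdef]
        have heq : (univ.filter fun s => r s < r l) = (univ.filter fun s => j (σ s) < j k) := by
          apply Finset.filter_congr
          intro s _
          rw [hjσ s, ← hσl, hjσ l]
        rw [heq, pg4_card_filter_perm σ (fun m => j m < j k)]
      have hsub : (univ.filter fun m => j m < j k) ⊆ Finset.Ioi k := by
        intro m hm
        simp only [Finset.mem_filter] at hm
        rw [Finset.mem_Ioi]
        by_contra hc
        exact absurd (hjanti m k (le_of_not_gt hc)) (not_le.2 hm.2)
      have hcard : (univ.filter fun m => j m < j k).card ≤ n - 1 - k.val := by
        have := Finset.card_le_card hsub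
        rwa [Fin.card_Ioi] at this
      have hkn : k.val < n := k.isLt
      have hNl : N l ≤ (n:ℤ) - 1 - (k.val:ℤ) := by
        rw [hNcard]
        omega
      have hcl := hcond l
      rw [hjl]
      omega
    · intro l
      rw [hdecomp l, hjσ l, hQdef]
  · -- backward
    rintro ⟨i', σ, j, hi'0, hA', hj, ht'⟩
    have hA'0 : 0 ≤ ∑ l, i' l := Finset.sum_nonneg fun l _ => hi'0 l
    -- canonical decomposition agrees
    have hiq : ∀ l, i l = i' l ∧ r l = j (σ l) := by
      intro l
      have hjb := hj (σ l)
      have hd1 : 1 ≤ j (σ l) := hjb.1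
      have hd2 : j (σ l) ≤ (q:ℤ) := by
        have := hjb.2
        have hσ0 : (0:ℤ) ≤ ((σ l).val : ℤ) := Int.natCast_nonneg _
        omega
      have htl : t l - 1 = (j (σ l) - 1) + Q * i' l := by
        have := ht' l
        rw [hQdef]; rw [hQdef] at this; omega
      constructor
      · simp only [hidef]
        rw [htl, Int.add_mul_ediv_left _ _ (by omega : Q ≠ 0),
          Int.ediv_eq_zero_of_lt (by omega) (by omega)]
        omega
      · simp only [hrdef]
        rw [htl, Int.add_mul_emod_self_left, Int.emod_eq_of_lt (by omega) (by omega)]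
        omega
    have hAA : A = ∑ l, i' l := by
      rw [hAdef]
      exact Finset.sum_congr rfl fun l _ => (hiq l).1
    intro l
    set k : Fin n := σ l with hk
    have hrl : r l = j k := (hiq l).2
    set S : Finset (Fin n) := univ.filter (fun m => j k ≤ j m) with hS
    have hkS : k ∈ S := by simp [hS]
    have hSne : S.Nonempty := ⟨k, hkS⟩
    set m₀ : Fin n := S.max' hSne with hm₀
    have hm₀S : m₀ ∈ S := S.max'_mem hSne
    have hm1 : j k ≤ j m₀ := by
      have := hm₀S; simp only [hS, Finset.mem_filter] at this; exact this.2
    have hm2 : j m₀ ≤ (q:ℤ) - (∑ l, i' l) - ((m₀.val:ℤ) + 1) := (hj m₀).2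
    have hScard : S.card ≤ m₀.val + 1 := by
      have hsub : S ⊆ Finset.Iic m₀ := by
        intro m hm
        rw [Finset.mem_Iic]
        exact S.le_max' m hm
      have := Finset.card_le_card hsub
      rwa [Fin.card_Iic] at this
    have hNl : N l = (n:ℤ) - (S.card:ℤ) := by
      simp only [hNdef]
      have h1 : (univ.filter fun s => r s < r l).card
          = (univ.filter fun m => j m < j k).card := by
        have heq : (univ.filter fun s => r s < r l) = (univ.filter fun s => j (σ s) < j k) := by
          apply Finset.filter_congr
          intro s _
          rw [(hiq s).2, hrl]
        rw [heq, pg4_card_filter_perm σ (fun m => j m < j k)]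
      have h2 : (univ.filter fun m => j m < j k).card + S.card = n := by
        have h3 := Finset.card_filter_add_card_filter_not (s := (univ : Finset (Fin n)))
          (p := fun m => j m < j k)
        simp only [not_lt, Finset.card_univ, Fintype.card_fin] at h3
        rw [hS]
        convert h3 using 3
      omega
    have hc1 : (S.card : ℤ) ≤ (m₀.val:ℤ) + 1 := by exact_mod_cast hScard
    omega
end

section
/- Let q be a prime power and n ≥ 2 an integer. If an n-tuple (t_1,…,t_n) of positive integers satisfies, for every k ∈ {1,…,n}, the inequality (q+1)·Σ_{s≠k} ⌈(t_k − t_s)/(q+1)⌉ + (q+1)·(q−n)·⌈t_k/(q+1)⌉ > q·t_k, then q+1 does not divide t_k for any k ∈ {1,…,n}. -/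
/-- For a prime power `q` and `n ≥ 2`, if an `n`-tuple of positive integers
satisfies the Hermitian pure gap inequalities, then `q+1` divides none of its entries. -/
theorem stmt_5 (q n : ℕ) (hq : IsPrimePow q) (hn : 2 ≤ n)
    (t : Fin n → ℤ) (ht : ∀ k, 1 ≤ t k)
    (h : ∀ k : Fin n,
        ((q : ℤ) + 1) * (∑ s ∈ Finset.univ.erase k,
            ⌈((t k : ℚ) - (t s : ℚ)) / ((q : ℚ) + 1)⌉)
          + ((q : ℤ) + 1) * ((q : ℤ) - (n : ℤ)) * ⌈(t k : ℚ) / ((q : ℚ) + 1)⌉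
          > (q : ℤ) * t k) :
    ∀ k : Fin n, ¬ ((q : ℤ) + 1 ∣ t k) := by
  intro k hdvd
  obtain ⟨m, hm⟩ := hdvd
  have hqpos : (0:ℚ) < (q:ℚ) + 1 := by positivity
  have hm1 : 1 ≤ m := by
    by_contra hlt
    push_neg at hlt
    have : t k ≤ 0 := by
      rw [hm]
      have : m ≤ 0 := by omega
      nlinarith [Int.natCast_nonneg q]
    linarith [ht k]
  have hceil1 : ⌈(t k : ℚ) / ((q : ℚ) + 1)⌉ = m := by
    have : (t k : ℚ) / ((q : ℚ) + 1) = (m : ℚ) := by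
      rw [hm]; push_cast; field_simp
    rw [this, Int.ceil_intCast]
  have hceil2 : ∀ s : Fin n, ⌈((t k : ℚ) - (t s : ℚ)) / ((q : ℚ) + 1)⌉ ≤ m := by
    intro s
    rw [Int.ceil_le]
    rw [div_le_iff₀ hqpos, hm]
    push_cast
    have := ht s
    have : (1:ℚ) ≤ (t s : ℚ) := by exact_mod_cast this
    nlinarith
  have hsum : (∑ s ∈ Finset.univ.erase k,
      ⌈((t k : ℚ) - (t s : ℚ)) / ((q : ℚ) + 1)⌉) ≤ (n - 1) * m := by
    calc (∑ s ∈ Finset.univ.erase k, ⌈((t k : ℚ) - (t s : ℚ)) / ((q : ℚ) + 1)⌉)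
        ≤ ∑ s ∈ Finset.univ.erase k, m :=
          Finset.sum_le_sum fun s _ => hceil2 s
      _ = (n - 1) * m := by
          rw [Finset.sum_const, Finset.card_erase_of_mem (Finset.mem_univ k),
            Finset.card_univ, Fintype.card_fin, nsmul_eq_mul,
            Nat.cast_sub (by omega : 1 ≤ n), Nat.cast_one]
  have hk := h k
  rw [hceil1] at hk
  have hq1 : (1:ℤ) ≤ (q:ℤ) := by
    have := hq.two_le
    exact_mod_cast Nat.one_le_of_lt this
  have hmul : ((q:ℤ) + 1) * (∑ s ∈ Finset.univ.erase k,
      ⌈((t k : ℚ) - (t s : ℚ)) / ((q : ℚ) + 1)⌉) ≤ ((q:ℤ) + 1) * ((n - 1) * m) := by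
    apply mul_le_mul_of_nonneg_left hsum
    linarith
  nlinarith [hk, hmul, hm]
end

section
/- Let q ≥ 1, n ≥ 1 and A ≥ 0 be integers, and let j_1 ≥ j_2 ≥ ⋯ ≥ j_n be integers with 1 ≤ j_s ≤ q for all s. If for every k ∈ {1,…,n} one has Σ_{s≠k} ⌈(j_k − j_s)/(q+1)⌉ − j_k ≥ A − (q−n), then j_k ≤ q−k−A for every k ∈ {1,…,n}; in particular (taking k = n) A ≤ q−n−1. -/
/-- For integers `q ≥ 1`, `n ≥ 1`, `A ≥ 0` and a nonincreasing tuple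
`j_1 ≥ ⋯ ≥ j_n` with `1 ≤ j_s ≤ q`, if `Σ_{s≠k} ⌈(j_k-j_s)/(q+1)⌉ - j_k ≥ A - (q-n)`
for all `k`, then `j_k ≤ q-k-A` for all `k`, and in particular `A ≤ q-n-1`. -/
theorem stmt_6 (q A : ℤ) (hq : 1 ≤ q) (hA : 0 ≤ A) (n : ℕ) (hn : 1 ≤ n)
    (j : Fin n → ℤ) (hmono : ∀ k l : Fin n, k ≤ l → j l ≤ j k)
    (hj : ∀ s : Fin n, 1 ≤ j s ∧ j s ≤ q)
    (h : ∀ k : Fin n,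
        (∑ s ∈ Finset.univ.erase k, ⌈((j k : ℚ) - (j s : ℚ)) / ((q : ℚ) + 1)⌉) - j k
          ≥ A - (q - (n : ℤ))) :
    (∀ k : Fin n, j k ≤ q - ((k.val : ℤ) + 1) - A) ∧ A ≤ q - (n : ℤ) - 1 := by
  have hqQ : (0 : ℚ) < (q : ℚ) + 1 := by positivity
  have key : ∀ k : Fin n, j k ≤ q - ((k.val : ℤ) + 1) - A := by
    intro k
    have hsum : (∑ s ∈ Finset.univ.erase k, ⌈((j k : ℚ) - (j s : ℚ)) / ((q : ℚ) + 1)⌉)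
        ≤ ∑ s ∈ Finset.univ.erase k, (if k < s then (1 : ℤ) else 0) := by
      apply Finset.sum_le_sum
      intro s hs
      by_cases hks : k < s
      · simp only [hks, if_true]
        rw [Int.ceil_le]
        push_cast
        rw [div_le_one hqQ]
        have h1 : (j k : ℚ) ≤ (q : ℚ) := by exact_mod_cast (hj k).2
        have h2 : (1 : ℚ) ≤ (j s : ℚ) := by exact_mod_cast (hj s).1
        linarith
      · simp only [hks, if_false]
        have hsk : s ≤ k := le_of_not_gt hks
        have : j k ≤ j s := hmono s k hsk
        have : ((j k : ℚ) - (j s : ℚ)) / ((q : ℚ) + 1) ≤ 0 := by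
          apply div_nonpos_of_nonpos_of_nonneg
          · exact sub_nonpos.mpr (by exact_mod_cast this)
          · linarith
        calc ⌈((j k : ℚ) - (j s : ℚ)) / ((q : ℚ) + 1)⌉ ≤ ⌈(0 : ℚ)⌉ := Int.ceil_le_ceil this
          _ = 0 := by simp
    have hcount : (∑ s ∈ Finset.univ.erase k, (if k < s then (1 : ℤ) else 0))
        = ((Finset.Ioi k).card : ℤ) := by
      rw [Finset.sum_ite, Finset.sum_const_zero, add_zero, Finset.sum_const,
        nsmul_eq_mul, mul_one]
      congr 1
      congr 1
      ext s
      simp only [Finset.mem_filter, Finset.mem_erase, Finset.mem_univ, and_true, true_and,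
        Finset.mem_Ioi]
      exact ⟨fun h => h.2, fun h => ⟨(ne_of_lt h).symm, h⟩⟩
    have hcard : (Finset.Ioi k).card = n - 1 - k.val := Fin.card_Ioi k
    have hk := h k
    have hkn : k.val < n := k.isLt
    have h1 := (hj k).1
    rw [hcount, hcard] at hsum
    have : ((n - 1 - k.val : ℕ) : ℤ) = (n : ℤ) - 1 - k.val := by omega
    rw [this] at hsum
    linarith
  refine ⟨key, ?_⟩
  have hlast := key ⟨n - 1, by omega⟩
  have h1 := (hj ⟨n - 1, by omega⟩).1
  simp only at hlast
  omega
end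

section
/- Let n ≥ 2 and t ≥ n+1 be integers. For 0 ≤ i ≤ n−1 define Ω_i := {(j_1,…,j_n) ∈ ℤ^n : t−n+1 ≤ j_k ≤ t−k for all 1 ≤ k ≤ i, and 1 ≤ j_s ≤ t−n for all i+1 ≤ s ≤ n}, and let B_t := {(j_1,…,j_n) ∈ ℤ^n : 1 ≤ j_k ≤ t−k for all k}. Then the sets ∪_σ σ(Ω_i), for i = 0,1,…,n−1 (union over all permutations σ of {1,…,n}), are pairwise disjoint and their union equals ∪_σ σ(B_t). -/
/-- The set `Ω_i ⊆ ℤ^n`: `t-n+1 ≤ j_k ≤ t-k` for `1 ≤ k ≤ i` and `1 ≤ j_s ≤ t-n`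
for `i+1 ≤ s ≤ n` (0-indexed: first `i` coordinates vs the rest). -/
def Omega (n : ℕ) (t : ℤ) (i : ℕ) : Set (Fin n → ℤ) :=
  {j | ∀ k : Fin n,
    (k.val < i → (t - (n : ℤ) + 1 ≤ j k ∧ j k ≤ t - ((k.val : ℤ) + 1))) ∧
    (i ≤ k.val → (1 ≤ j k ∧ j k ≤ t - (n : ℤ)))}

/-- The union `⋃_σ σ(S)` over all permutations `σ` of `{1,…,n}`. -/
def permUnion (n : ℕ) (S : Set (Fin n → ℤ)) : Set (Fin n → ℤ) :=
  ⋃ σ : Equiv.Perm (Fin n), (fun j => j ∘ σ) '' S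

lemma aux_card_perm {n : ℕ} (π : Equiv.Perm (Fin n)) (f : Fin n → ℤ) (c : ℤ) :
    (Finset.univ.filter fun k => c < f (π k)).card
      = (Finset.univ.filter fun k => c < f k).card := by
  apply Finset.card_bij' (fun k _ => π k) (fun k _ => π.symm k) <;> simp

lemma aux_card_lt {n : ℕ} (i : ℕ) (h : i ≤ n) :
    (Finset.univ.filter fun m : Fin n => m.val < i).card = i := by
  rcases Nat.lt_or_ge i n with h'|h'
  · have : (Finset.univ.filter fun m : Fin n => m.val < i) = Finset.Iio ⟨i, h'⟩ := by
      ext m; simp [Finset.mem_Iio, Fin.lt_def]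
    rw [this, Fin.card_Iio]
  · have : (Finset.univ.filter fun m : Fin n => m.val < i) = Finset.univ := by
      ext m; simpa using lt_of_lt_of_le m.isLt h'
    rw [this]; simp; omega

lemma aux_count_antitone {n : ℕ} {g : Fin n → ℤ} (hg : Antitone g) (c : ℤ) (k : Fin n)
    (h : c < g k) :
    k.val + 1 ≤ (Finset.univ.filter fun m => c < g m).card := by
  have hsub : Finset.Iic k ⊆ Finset.univ.filter fun m => c < g m := by
    intro m hm
    simp only [Finset.mem_Iic] at hm
    simp only [Finset.mem_filter, Finset.mem_univ, true_and]
    exact lt_of_lt_of_le h (hg hm)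
  calc k.val + 1 = (Finset.Iic k).card := (Fin.card_Iic k).symm
    _ ≤ _ := Finset.card_le_card hsub

/-- count of entries exceeding `t - (k+1)` is at most `k` for `f` in `B_t`. -/
lemma aux_B_count {n : ℕ} (t : ℤ) {f : Fin n → ℤ}
    (hf : ∀ m : Fin n, f m ≤ t - ((m.val : ℤ) + 1)) (k : ℕ) (hk : k ≤ n) :
    (Finset.univ.filter fun m => t - ((k : ℤ) + 1) < f m).card ≤ k := by
  have hsub : (Finset.univ.filter fun m => t - ((k : ℤ) + 1) < f m)
      ⊆ Finset.univ.filter fun m : Fin n => m.val < k := by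
    intro m hm
    simp only [Finset.mem_filter, Finset.mem_univ, true_and] at hm ⊢
    have := hf m
    have : (m.val : ℤ) < (k : ℤ) := by linarith
    exact_mod_cast this
  calc _ ≤ (Finset.univ.filter fun m : Fin n => m.val < k).card := Finset.card_le_card hsub
    _ = k := aux_card_lt k hk

/-- For `x` in `permUnion (Omega n t i)` with `i ≤ n`, the count of coordinates
exceeding `t - n` equals `i`. -/
lemma aux_count_of_mem {n : ℕ} (t : ℤ) (ht : (n : ℤ) + 1 ≤ t) {i : ℕ} (hi : i ≤ n)
    {x : Fin n → ℤ} (hx : x ∈ permUnion n (Omega n t i)) :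
    (Finset.univ.filter fun k => t - (n : ℤ) < x k).card = i := by
  rw [permUnion, Set.mem_iUnion] at hx
  obtain ⟨σ, g, hg, hgx⟩ := hx
  have hxg : ∀ k, x k = g (σ k) := fun k => by rw [← hgx]; rfl
  have h0 : (Finset.univ.filter fun k => t - (n : ℤ) < x k)
      = Finset.univ.filter fun k => t - (n : ℤ) < g (σ k) :=
    Finset.filter_congr (fun k _ => by rw [hxg])
  have h1 : (Finset.univ.filter fun k => t - (n : ℤ) < x k).card
      = (Finset.univ.filter fun k => t - (n : ℤ) < g k).card := by
    rw [h0]; exact aux_card_perm σ g _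
  have h2 : (Finset.univ.filter fun k => t - (n : ℤ) < g k)
      = Finset.univ.filter fun k : Fin n => k.val < i := by
    ext k
    simp only [Finset.mem_filter, Finset.mem_univ, true_and]
    constructor
    · intro h
      by_contra hk
      push_neg at hk
      have := (hg k).2 hk
      linarith [this.2]
    · intro h
      have := ((hg k).1 h).1
      linarith
  rw [h1, h2, aux_card_lt i hi]

/-- Every element of `B_t` lies in `permUnion (Omega n t i)` for some `i < n`. -/
lemma aux_sort {n : ℕ} (hn : 1 ≤ n) (t : ℤ) (ht : (n : ℤ) + 1 ≤ t) {f : Fin n → ℤ}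
    (hf : ∀ k : Fin n, 1 ≤ f k ∧ f k ≤ t - ((k.val : ℤ) + 1)) :
    ∃ i < n, f ∈ permUnion n (Omega n t i) := by
  set π : Equiv.Perm (Fin n) := (Fin.revPerm).trans (Tuple.sort f) with hπ
  set g : Fin n → ℤ := f ∘ π with hgdef
  have hganti : Antitone g := by
    intro a b hab
    exact Tuple.monotone_sort f (Fin.rev_le_rev.mpr hab)
  set i : ℕ := (Finset.univ.filter fun m => t - (n : ℤ) < g m).card with hidef
  -- the last index has a small value
  set last : Fin n := ⟨n - 1, by omega⟩ with hlastdef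
  have hlastmax : ∀ m : Fin n, m ≤ last := by
    intro m
    rw [Fin.le_def]
    have := m.isLt
    simp only [hlastdef]
    omega
  have hglast : g last ≤ t - n := by
    have h1 : g last ≤ g (π.symm last) := hganti (hlastmax _)
    have h2 : g (π.symm last) = f last := by simp [hgdef]
    have h3 : f last ≤ t - ((last.val : ℤ) + 1) := (hf last).2
    have h4 : last.val = n - 1 := rfl
    have h5 : ((last.val : ℤ) + 1) = (n : ℤ) := by
      rw [h4]; push_cast; omega
    rw [h2] at h1; rw [h5] at h3; linarith
  have hin : i < n := by
    have hnot : last ∉ (Finset.univ.filter fun m => t - (n : ℤ) < g m) := by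
      simp only [Finset.mem_filter, Finset.mem_univ, true_and, not_lt]
      exact hglast
    have hsub : (Finset.univ.filter fun m => t - (n : ℤ) < g m) ⊆ Finset.univ.erase last :=
      fun m hm => Finset.mem_erase.mpr ⟨fun h => hnot (h ▸ hm), Finset.mem_univ m⟩
    calc i ≤ (Finset.univ.erase last).card := Finset.card_le_card hsub
      _ = n - 1 := by rw [Finset.card_erase_of_mem (Finset.mem_univ last)]; simp
      _ < n := by omega
  have hcount : ∀ k : Fin n, t - (n : ℤ) < g k ↔ k.val < i := by
    intro k
    constructor
    · intro h
      have := aux_count_antitone hganti (t - n) k h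
      omega
    · intro h
      by_contra hk
      push_neg at hk
      have hsub : (Finset.univ.filter fun m => t - (n : ℤ) < g m) ⊆ Finset.Iio k := by
        intro m hm
        simp only [Finset.mem_filter, Finset.mem_univ, true_and] at hm
        simp only [Finset.mem_Iio]
        by_contra hmk
        push_neg at hmk
        exact absurd (lt_of_lt_of_le hm (hganti hmk)) (not_lt.mpr hk)
      have := Finset.card_le_card hsub
      rw [Fin.card_Iio] at this
      omega
  have hΩ : g ∈ Omega n t i := by
    intro k
    constructor
    · intro hk
      have hgk : t - (n : ℤ) < g k := (hcount k).mpr hk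
      refine ⟨by linarith, ?_⟩
      by_contra hub
      push_neg at hub
      have h1 := aux_count_antitone hganti (t - ((k.val : ℤ) + 1)) k hub
      have h2 : (Finset.univ.filter fun m => t - ((k.val : ℤ) + 1) < g m).card
          = (Finset.univ.filter fun m => t - ((k.val : ℤ) + 1) < f m).card := by
        exact aux_card_perm π f _
      have h3 := aux_B_count t (fun m => (hf m).2) k.val (le_of_lt k.isLt)
      omega
    · intro hk
      refine ⟨(hf (π k)).1, ?_⟩
      have : ¬ (t - (n : ℤ) < g k) := fun h => absurd ((hcount k).mp h) (by omega)
      linarith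
  refine ⟨i, hin, ?_⟩
  rw [permUnion, Set.mem_iUnion]
  exact ⟨π.symm, g, hΩ, by funext m; simp [hgdef]⟩

/-- For `n ≥ 2` and `t ≥ n+1`, the sets `⋃_σ σ(Ω_i)`, `i = 0,…,n-1`, are
pairwise disjoint and their union is `⋃_σ σ(B_t)`. -/
theorem stmt_8 (n : ℕ) (hn : 2 ≤ n) (t : ℤ) (ht : (n : ℤ) + 1 ≤ t) :
    (∀ i1 i2 : ℕ, i1 < n → i2 < n → i1 ≠ i2 →
        Disjoint (permUnion n (Omega n t i1)) (permUnion n (Omega n t i2))) ∧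
    (⋃ i ∈ Finset.range n, permUnion n (Omega n t i))
      = permUnion n {j : Fin n → ℤ | ∀ k : Fin n, 1 ≤ j k ∧ j k ≤ t - ((k.val : ℤ) + 1)} := by
  constructor
  · intro i1 i2 h1 h2 h12
    rw [Set.disjoint_left]
    intro x hx1 hx2
    exact h12 ((aux_count_of_mem t ht (le_of_lt h1) hx1).symm.trans
      (aux_count_of_mem t ht (le_of_lt h2) hx2))
  · ext x
    simp only [Set.mem_iUnion, Finset.mem_range]
    constructor
    · rintro ⟨i, hi, hx⟩
      rw [permUnion, Set.mem_iUnion] at hx ⊢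
      obtain ⟨σ, g, hg, hgx⟩ := hx
      refine ⟨σ, g, ?_, hgx⟩
      intro k
      rcases lt_or_ge k.val i with hk | hk
      · have := (hg k).1 hk
        exact ⟨by linarith, this.2⟩
      · have := (hg k).2 hk
        have hkn : (k.val : ℤ) + 1 ≤ (n : ℤ) := by exact_mod_cast k.isLt
        exact ⟨this.1, by linarith⟩
    · intro hx
      rw [permUnion, Set.mem_iUnion] at hx
      obtain ⟨σ, f, hf, hfx⟩ := hx
      obtain ⟨i, hi, hmem⟩ := aux_sort (by omega) t ht hf
      refine ⟨i, hi, ?_⟩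
      rw [permUnion, Set.mem_iUnion] at hmem ⊢
      obtain ⟨τ, g, hg, hgf⟩ := hmem
      refine ⟨σ.trans τ, g, hg, ?_⟩
      rw [← hfx, ← hgf]
      rfl
end

section
/- Let q be a prime power, m ≥ 2 a divisor of q+1, N := (q+1)/m, and 2 ≤ n ≤ q an integer. Then the following two sets of n-tuples (t_1,…,t_n) of positive integers are equal: (E₁) the set of tuples such that for every k ∈ {1,…,n}, m·Σ_{s∈{1,…,n}, s≠k} ⌈(t_k − t_s)/m⌉ + m·(q−n)·⌈t_k/m⌉ > q·t_k; and (E₂) the set of tuples such that m·Σ_{s=2}^{n−1} ⌈(t_n − t_s)/m⌉ + m·(q−n+1)·⌈t_n/m⌉ > t_1 + q·t_n, and for every k ∈ {1,…,n−1}, m·Σ_{s∈{1,…,n−1}, s≠k} ⌈(t_k − t_s)/m⌉ + m·(q−n+1)·⌈t_k/m⌉ > t_n + q·t_k. -/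
private lemma lt_mul_iff' (m A K : ℤ) (hm : 0 < m) (h0 : 0 ≤ A) (h1 : A < m) :
    A < m * K ↔ 1 ≤ K := by
  constructor
  · intro h
    by_contra hK
    push_neg at hK
    nlinarith
  · intro h
    nlinarith

private lemma core' (m S u v w A B : ℤ) (hm : 0 < m) (hA0 : 0 ≤ A) (hA1 : A < m)
    (hB0 : 0 ≤ B) (hB1 : B < m) (hA : m ∣ u + A) (hB : m ∣ v + B)
    (hw : m ∣ w + v) (hS : m ∣ S) :
    (S + (u + A) > w ↔ S + (v + B) > (v - u) + w) := by
  obtain ⟨i, hi⟩ := hA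
  obtain ⟨l, hl⟩ := hB
  obtain ⟨j, hj⟩ := hw
  obtain ⟨z, hz⟩ := hS
  have e : m * (z + i + l - j) = m * z + m * i + m * l - m * j := by ring
  have h1 : S + (u + A) > w ↔ B < m * (z + i + l - j) := by
    constructor
    · intro h; linarith
    · intro h; linarith
  have h2 : S + (v + B) > (v - u) + w ↔ A < m * (z + i + l - j) := by
    constructor
    · intro h; linarith
    · intro h; linarith
  rw [h1, h2, lt_mul_iff' m B _ hm hB0 hB1, lt_mul_iff' m A _ hm hA0 hA1]

/-- master lemma: the two inequality shapes are equivalent. -/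
private lemma master (m q nC u v X : ℤ) (hm : 0 < m) (hq : m ∣ q + 1) (hX : m ∣ X) :
    (X + (u + (-u) % m) + nC * (v + (-v) % m) > q * v ↔
      X + (nC + 1) * (v + (-v) % m) > (v - u) + q * v) := by
  set A := (-u) % m with hAdef
  set B := (-v) % m with hBdef
  have hm' : m ≠ 0 := ne_of_gt hm
  have hA0 : 0 ≤ A := Int.emod_nonneg _ hm'
  have hA1 : A < m := Int.emod_lt_of_pos _ hm
  have hB0 : 0 ≤ B := Int.emod_nonneg _ hm'
  have hB1 : B < m := Int.emod_lt_of_pos _ hm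
  have hA : m ∣ u + A := by
    refine ⟨-((-u) / m), ?_⟩
    rw [hAdef, Int.emod_def]; ring
  have hB : m ∣ v + B := by
    refine ⟨-((-v) / m), ?_⟩
    rw [hBdef, Int.emod_def]; ring
  have hw : m ∣ q * v + v := by
    obtain ⟨c, hc⟩ := hq
    exact ⟨c * v, by rw [show q * v + v = (q + 1) * v by ring, hc]; ring⟩
  have hS : m ∣ X + nC * (v + B) := dvd_add hX (Dvd.dvd.mul_left hB nC)
  have h := core' m (X + nC * (v + B)) u v (q * v) A B hm hA0 hA1 hB0 hB1 hA hB hw hS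
  constructor
  · intro hh
    have : X + nC * (v + B) + (u + A) > q * v := by linarith
    have := h.mp this
    linarith
  · intro hh
    have : X + nC * (v + B) + (v + B) > (v - u) + q * v := by linarith
    have := h.mpr this
    linarith

private lemma ceil_div_eq (m : ℕ) (hm : 0 < m) (x : ℤ) :
    (m : ℤ) * ⌈(x : ℚ) / (m : ℚ)⌉ = x + (-x) % m := by
  have h1 : ⌈(x : ℚ) / (m : ℚ)⌉ = -⌊((-x : ℤ) : ℚ) / (m : ℚ)⌋ := by
    have e : ((-x : ℤ) : ℚ) / (m : ℚ) = -((x : ℚ) / (m : ℚ)) := by push_cast; ring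
    rw [e, Int.floor_neg, neg_neg]
  rw [h1, Rat.floor_intCast_div_natCast]
  have h2 := Int.emod_add_mul_ediv (-x) (m : ℤ)
  have hm' : ((m : ℤ)) ≠ 0 := by exact_mod_cast Nat.pos_iff_ne_zero.mp hm
  nlinarith [h2]

private lemma dvd_cc (m : ℕ) (x : ℤ) : (m : ℤ) ∣ x + (-x) % m := by
  refine ⟨-((-x) / m), ?_⟩
  rw [Int.emod_def]; ring

/-- For a prime power `q`, a divisor `m ≥ 2` of `q+1` with `N = (q+1)/m`,
and `2 ≤ n ≤ q`, the pure gap set `E₁ = G₀(P_1,…,P_n)` equals the pure gap set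
`E₂ = G₀(P_1,…,P_{n-1},P_∞)` for the quotient Hermitian curve `y^m = x^q + x`.
(Indices are 0-based: `t_1 = t ⟨0,_⟩`, `t_n = t ⟨n-1,_⟩`.) -/
theorem stmt_10 (q m N n : ℕ) (hq : IsPrimePow q) (hm : 2 ≤ m) (hdvd : m ∣ q + 1)
    (hN : q + 1 = m * N) (hn : 2 ≤ n) (hnq : n ≤ q) :
    {t : Fin n → ℤ | (∀ k, 1 ≤ t k) ∧ ∀ k : Fin n,
        (m : ℤ) * (∑ s ∈ Finset.univ.erase k, ⌈((t k : ℚ) - (t s : ℚ)) / (m : ℚ)⌉)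
          + (m : ℤ) * ((q : ℤ) - (n : ℤ)) * ⌈(t k : ℚ) / (m : ℚ)⌉
          > (q : ℤ) * t k}
    = {t : Fin n → ℤ | (∀ k, 1 ≤ t k) ∧
        ((m : ℤ) * (∑ s ∈ (Finset.univ.erase (⟨0, by omega⟩ : Fin n)).erase ⟨n - 1, by omega⟩,
            ⌈((t ⟨n - 1, by omega⟩ : ℚ) - (t s : ℚ)) / (m : ℚ)⌉)
          + (m : ℤ) * ((q : ℤ) - (n : ℤ) + 1) * ⌈(t ⟨n - 1, by omega⟩ : ℚ) / (m : ℚ)⌉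
          > t ⟨0, by omega⟩ + (q : ℤ) * t ⟨n - 1, by omega⟩) ∧
        ∀ k : Fin n, k ≠ ⟨n - 1, by omega⟩ →
          (m : ℤ) * (∑ s ∈ (Finset.univ.erase (⟨n - 1, by omega⟩ : Fin n)).erase k,
              ⌈((t k : ℚ) - (t s : ℚ)) / (m : ℚ)⌉)
            + (m : ℤ) * ((q : ℤ) - (n : ℤ) + 1) * ⌈(t k : ℚ) / (m : ℚ)⌉
            > t ⟨n - 1, by omega⟩ + (q : ℤ) * t k} := by
  have hm0 : 0 < m := by omega
  have hmZ : (0 : ℤ) < m := by exact_mod_cast hm0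
  have hqm : (m : ℤ) ∣ (q : ℤ) + 1 := by
    have := Int.natCast_dvd_natCast.mpr hdvd
    push_cast at this
    exact this
  ext t
  simp only [Set.mem_setOf_eq]
  apply and_congr_right'
  -- abbreviation for `m * ceil(x/m)` in integer form
  set cc : ℤ → ℤ := fun x => x + (-x) % m with hcc
  -- rewrite sums of ceilings in cc form
  have hsum : ∀ (F : Finset (Fin n)) (a : Fin n),
      (m : ℤ) * (∑ s ∈ F, ⌈((t a : ℚ) - (t s : ℚ)) / (m : ℚ)⌉) = ∑ s ∈ F, cc (t a - t s) := by
    intro F a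
    rw [Finset.mul_sum]
    refine Finset.sum_congr rfl fun s _ => ?_
    have := ceil_div_eq m hm0 (t a - t s)
    rw [hcc]
    simp only
    push_cast at this ⊢
    linarith
  have hcex : ∀ a : Fin n, (m : ℤ) * ⌈(t a : ℚ) / (m : ℚ)⌉ = cc (t a) := fun a =>
    ceil_div_eq m hm0 (t a)
  -- key per-index equivalence
  have key : ∀ (k j : Fin n), k ≠ j →
      ((m : ℤ) * (∑ s ∈ Finset.univ.erase k, ⌈((t k : ℚ) - (t s : ℚ)) / (m : ℚ)⌉)
          + (m : ℤ) * ((q : ℤ) - (n : ℤ)) * ⌈(t k : ℚ) / (m : ℚ)⌉ > (q : ℤ) * t k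
        ↔ (m : ℤ) * (∑ s ∈ (Finset.univ.erase j).erase k, ⌈((t k : ℚ) - (t s : ℚ)) / (m : ℚ)⌉)
          + (m : ℤ) * ((q : ℤ) - (n : ℤ) + 1) * ⌈(t k : ℚ) / (m : ℚ)⌉
          > t j + (q : ℤ) * t k) := by
    intro k j hkj
    have hjmem : j ∈ Finset.univ.erase k := by
      simp [Finset.mem_erase, hkj.symm]
    have hsplit : (∑ s ∈ Finset.univ.erase k, cc (t k - t s))
        = cc (t k - t j) + ∑ s ∈ (Finset.univ.erase j).erase k, cc (t k - t s) := by
      rw [Finset.erase_right_comm (a := j) (b := k)]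
      exact (Finset.add_sum_erase _ _ hjmem).symm
    have hX : (m : ℤ) ∣ ∑ s ∈ (Finset.univ.erase j).erase k, cc (t k - t s) :=
      Finset.dvd_sum fun s _ => dvd_cc m _
    have hmaster := master (m : ℤ) (q : ℤ) ((q : ℤ) - (n : ℤ)) (t k - t j) (t k)
      (∑ s ∈ (Finset.univ.erase j).erase k, cc (t k - t s)) hmZ hqm hX
    rw [hsum, hsum, hsplit]
    have e1 : (m : ℤ) * ((q : ℤ) - (n : ℤ)) * ⌈(t k : ℚ) / (m : ℚ)⌉
        = ((q : ℤ) - (n : ℤ)) * cc (t k) := by rw [← hcex k]; ring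
    have e2 : (m : ℤ) * ((q : ℤ) - (n : ℤ) + 1) * ⌈(t k : ℚ) / (m : ℚ)⌉
        = ((q : ℤ) - (n : ℤ) + 1) * cc (t k) := by rw [← hcex k]; ring
    rw [e1, e2]
    have hu : cc (t k - t j) = (t k - t j) + (-(t k - t j)) % m := rfl
    have hv : cc (t k) = t k + (-(t k)) % m := rfl
    rw [hu, hv]
    constructor
    · intro h
      have := hmaster.mp (by linarith)
      linarith
    · intro h
      have := hmaster.mpr (by linarith)
      linarith
  -- assemble
  set j0 : Fin n := ⟨0, by omega⟩ with hj0
  set jn : Fin n := ⟨n - 1, by omega⟩ with hjn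
  have hne : jn ≠ j0 := by
    simp only [hj0, hjn, Ne, Fin.mk.injEq]
    omega
  constructor
  · intro h
    refine ⟨(key jn j0 hne).mp (h jn), fun k hk => (key k jn hk).mp (h k)⟩
  · rintro ⟨h1, h2⟩ k
    by_cases hk : k = jn
    · subst hk
      exact (key jn j0 hne).mpr h1
    · exact (key k jn hk).mpr (h2 k hk)
end

section
/- Let q ≥ 1, N ≥ 1, m ≥ 2, n ≥ 1 and A ≥ 0 be integers, and let j_1 ≥ j_2 ≥ ⋯ ≥ j_n be integers with 1 ≤ j_s ≤ m−1 for all s. If for every k ∈ {1,…,n} one has Σ_{s≠k} ⌈(j_k − j_s)/m⌉ − N·j_k ≥ A − (q−n), then N ≤ N·j_k ≤ q−k−A for every k ∈ {1,…,n}; in particular (taking k = n) A ≤ q−n−N. -/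
lemma stmt12_sum_bound (m : ℤ) (hm : 2 ≤ m) (n : ℕ) (j : Fin n → ℤ)
    (hmono : ∀ k l : Fin n, k ≤ l → j l ≤ j k)
    (hj : ∀ s : Fin n, 1 ≤ j s ∧ j s ≤ m - 1) (k : Fin n) :
    (∑ s ∈ Finset.univ.erase k, ⌈((j k : ℚ) - (j s : ℚ)) / (m : ℚ)⌉)
      ≤ (n : ℤ) - 1 - k.val := by
  have hm0 : (0:ℚ) < (m:ℚ) := by exact_mod_cast (by linarith : (0:ℤ) < m)
  have hb : ∀ s ∈ Finset.univ.erase k,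
      ⌈((j k : ℚ) - (j s : ℚ)) / (m : ℚ)⌉ ≤ (if k < s then 1 else 0) := by
    intro s hs
    by_cases hks : k < s
    · simp only [hks, if_true]
      rw [Int.ceil_le]
      have h1 : j k ≤ m - 1 := (hj k).2
      have h2 : 1 ≤ j s := (hj s).1
      push_cast
      rw [div_le_one hm0]
      have : (j k : ℚ) ≤ (m:ℚ) - 1 := by exact_mod_cast h1
      have : (1:ℚ) ≤ (j s : ℚ) := by exact_mod_cast h2
      linarith
    · simp only [hks, if_false]
      have hsk : s ≤ k := le_of_not_gt hks
      have : j k ≤ j s := hmono s k hsk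
      have : ((j k : ℚ) - (j s : ℚ)) / (m : ℚ) ≤ 0 := by
        apply div_nonpos_of_nonpos_of_nonneg
        · have : (j k : ℚ) ≤ (j s : ℚ) := by exact_mod_cast this
          linarith
        · linarith
      calc ⌈((j k : ℚ) - (j s : ℚ)) / (m : ℚ)⌉ ≤ ⌈(0:ℚ)⌉ := Int.ceil_le_ceil this
        _ = 0 := by simp
  calc (∑ s ∈ Finset.univ.erase k, ⌈((j k : ℚ) - (j s : ℚ)) / (m : ℚ)⌉)
      ≤ ∑ s ∈ Finset.univ.erase k, (if k < s then 1 else 0) :=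
        Finset.sum_le_sum hb
    _ = ∑ s ∈ Finset.univ, (if k < s then (1:ℤ) else 0) := by
        rw [Finset.sum_erase]
        simp
    _ = ((Finset.univ.filter (fun s => k < s)).card : ℤ) := by
        simp [Finset.sum_boole]
    _ ≤ (n : ℤ) - 1 - k.val := by
        have : Finset.univ.filter (fun s => k < s) = Finset.Ioi k := by
          ext s; simp
        rw [this, Fin.card_Ioi]
        omega

/-- For integers `q ≥ 1`, `N ≥ 1`, `m ≥ 2`, `n ≥ 1`, `A ≥ 0` and a
nonincreasing tuple `j_1 ≥ ⋯ ≥ j_n` with `1 ≤ j_s ≤ m-1`, if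
`Σ_{s≠k} ⌈(j_k-j_s)/m⌉ - N·j_k ≥ A - (q-n)` for all `k`, then
`N ≤ N·j_k ≤ q-k-A` for all `k`, and in particular `A ≤ q-n-N`. -/
theorem stmt_12 (q N m A : ℤ) (hq : 1 ≤ q) (hN : 1 ≤ N) (hm : 2 ≤ m) (hA : 0 ≤ A)
    (n : ℕ) (hn : 1 ≤ n) (j : Fin n → ℤ)
    (hmono : ∀ k l : Fin n, k ≤ l → j l ≤ j k)
    (hj : ∀ s : Fin n, 1 ≤ j s ∧ j s ≤ m - 1)
    (h : ∀ k : Fin n,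
        (∑ s ∈ Finset.univ.erase k, ⌈((j k : ℚ) - (j s : ℚ)) / (m : ℚ)⌉) - N * j k
          ≥ A - (q - (n : ℤ))) :
    (∀ k : Fin n, N ≤ N * j k ∧ N * j k ≤ q - ((k.val : ℤ) + 1) - A) ∧
      A ≤ q - (n : ℤ) - N := by
  have main : ∀ k : Fin n, N ≤ N * j k ∧ N * j k ≤ q - ((k.val : ℤ) + 1) - A := by
    intro k
    constructor
    · nlinarith [(hj k).1]
    · have hsum := stmt12_sum_bound m hm n j hmono hj k
      have hk := h k
      linarith
  refine ⟨main, ?_⟩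
  have klast : Fin n := ⟨n - 1, by omega⟩
  have := main ⟨n - 1, by omega⟩
  have hv : ((⟨n - 1, by omega⟩ : Fin n).val : ℤ) = (n : ℤ) - 1 := by
    simp; omega
  linarith [this.1, this.2, hv.le, hv.ge]
end

section
/- Let q be a prime power, m ≥ 2 a divisor of q+1, N := (q+1)/m, n ≥ 1 and 0 ≤ A ≤ q−n−N integers. Define J_A := {(j_1,…,j_n) ∈ ℤ^n : 1 ≤ j_k ≤ m−1 for all k, and for every k ∈ {1,…,n}, Σ_{s≠k} ⌈(j_k − j_s)/m⌉ − N·j_k ≥ A − (q−n)}. Set t := ⌈(q−A)/N⌉, β := q−A−N(t−1), and λ_k := ⌈(k−β)/N⌉ + 1 for 1 ≤ k ≤ n. Then J_A equals the union, over all permutations σ of {1,…,n}, of σ(B_t), where B_t := {(j_1,…,j_n) ∈ ℤ^n : 1 ≤ j_k ≤ t−λ_k for all k} and σ(B_t) := {(j_{σ(1)},…,j_{σ(n)}) : (j_1,…,j_n) ∈ B_t}. -/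
/-- `t := ⌈(q-A)/N⌉`. -/
noncomputable def tA (q N A : ℕ) : ℤ := ⌈((q : ℚ) - (A : ℚ)) / (N : ℚ)⌉

/-- `β := q - A - N(t-1)`. -/
noncomputable def betaA (q N A : ℕ) : ℤ := (q : ℤ) - (A : ℤ) - (N : ℤ) * (tA q N A - 1)

/-- `λ_k := ⌈(k-β)/N⌉ + 1` (for the 1-based index `k`). -/
noncomputable def lamA (q N A : ℕ) (k : ℕ) : ℤ :=
  ⌈((k : ℚ) - (betaA q N A : ℚ)) / (N : ℚ)⌉ + 1

open Finset

private lemma t_sub_lam (q N A : ℕ) (hN : 0 < N) (k : ℕ) :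
    tA q N A - lamA q N A k = ((q : ℤ) - A - k) / N := by
  have hNQ : ((N : ℚ)) ≠ 0 := Nat.cast_ne_zero.mpr hN.ne'
  unfold lamA betaA
  have h1 : ((k : ℚ) - (((q : ℤ) - A - N * (tA q N A - 1) : ℤ) : ℚ)) / (N : ℚ)
      = ((k : ℚ) - ((q : ℚ) - A)) / N + ((tA q N A - 1 : ℤ) : ℚ) := by
    push_cast
    field_simp
    ring
  rw [h1, Int.ceil_add_intCast]
  have h2 : ⌈((k : ℚ) - ((q : ℚ) - A)) / (N : ℚ)⌉ = -(((q : ℤ) - A - k) / N) := by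
    rw [show ((k : ℚ) - ((q : ℚ) - A)) / (N : ℚ)
        = -((((q : ℤ) - A - k : ℤ) : ℚ) / ((N : ℕ) : ℚ)) by push_cast; ring]
    rw [Int.ceil_neg, Rat.floor_intCast_div_natCast]
  rw [h2]; ring

private lemma ceil_eq_ite (m : ℕ) (a b : ℤ)
    (ha1 : 1 ≤ a) (ha2 : a ≤ (m : ℤ) - 1) (hb1 : 1 ≤ b) (hb2 : b ≤ (m : ℤ) - 1) :
    ⌈((a : ℚ) - (b : ℚ)) / (m : ℚ)⌉ = if b < a then 1 else 0 := by
  have hm2 : 2 ≤ (m : ℤ) := by omega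
  have hm0 : (0 : ℚ) < m := by
    have : (0:ℤ) < m := by omega
    exact_mod_cast this
  split_ifs with h
  · rw [Int.ceil_eq_iff]
    constructor
    · push_cast
      have : (0:ℚ) < (a : ℚ) - b := by
        have : (0:ℤ) < a - b := by omega
        exact_mod_cast this
      calc (1:ℚ) - 1 = 0 := by norm_num
        _ < ((a:ℚ) - b) / m := by positivity
    · rw [show ((1:ℤ):ℚ) = 1 by norm_num, div_le_one hm0]
      have : (a:ℚ) - b ≤ (m:ℚ) := by
        have : a - b ≤ (m:ℤ) := by omega
        exact_mod_cast this
      linarith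
  · rw [Int.ceil_eq_iff]
    push_neg at h
    constructor
    · rw [show ((0:ℤ):ℚ) - 1 = -1 by norm_num, lt_div_iff₀ hm0]
      have : -(m:ℤ) < a - b := by omega
      have h' : -(m:ℚ) < (a:ℚ) - b := by exact_mod_cast this
      linarith
    · rw [show ((0:ℤ):ℚ) = 0 by norm_num, div_le_iff₀ hm0]
      have : (a:ℚ) - b ≤ 0 := by
        have : a - b ≤ (0:ℤ) := by omega
        exact_mod_cast this
      linarith

private lemma card_filter_le_of_perm {n : ℕ} (j b : Fin n → ℤ)
    (hb : ∀ i i' : Fin n, i ≤ i' → b i' ≤ b i) (σ : Equiv.Perm (Fin n))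
    (h : ∀ k, j (σ k) ≤ b k) (i : Fin n) :
    (univ.filter fun k => b i < j k).card ≤ i.val := by
  have h1 : (univ.filter fun k => b i < j (σ k)).card
      = (univ.filter fun k => b i < j k).card :=
    Finset.card_equiv σ (by intro a; simp)
  have h2 : (univ.filter fun k => b i < j (σ k)) ⊆ (univ.filter fun k => k < i) := by
    intro k hk
    simp only [Finset.mem_filter, Finset.mem_univ, true_and] at hk ⊢
    by_contra hki
    push_neg at hki
    exact absurd (le_trans (h k) (hb i k hki)) (not_le.mpr hk)
  have h3 : (univ.filter fun k : Fin n => k < i) = Finset.Iio i := by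
    ext k; simp
  have := Finset.card_le_card h2
  rw [h3, Fin.card_Iio] at this
  omega

private lemma exists_perm_of_card {n : ℕ} (j b : Fin n → ℤ)
    (h : ∀ i : Fin n, (univ.filter fun k => b i < j k).card ≤ i.val) :
    ∃ σ : Equiv.Perm (Fin n), ∀ k, j (σ k) ≤ b k := by
  refine ⟨(Fin.revPerm).trans (Tuple.sort j), fun k => ?_⟩
  simp only [Equiv.trans_apply, Fin.revPerm_apply]
  by_contra hcon
  push_neg at hcon
  have hmono := Tuple.monotone_sort j
  have hsub : Finset.Ici (k.rev) ⊆ univ.filter fun l => b k < j (Tuple.sort j l) := by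
    intro l hl
    simp only [Finset.mem_Ici] at hl
    simp only [Finset.mem_filter, Finset.mem_univ, true_and]
    exact lt_of_lt_of_le hcon (hmono hl)
  have hcard1 : n - k.rev.val ≤ (univ.filter fun l => b k < j (Tuple.sort j l)).card := by
    have := Finset.card_le_card hsub
    rwa [Fin.card_Ici] at this
  have hcard2 : (univ.filter fun l => b k < j (Tuple.sort j l)).card
      = (univ.filter fun l => b k < j l).card :=
    Finset.card_equiv (Tuple.sort j) (by intro a; simp)
  have h4 := h k
  have hrev : k.rev.val = n - (k.val + 1) := Fin.val_rev k
  have h5 := k.isLt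
  omega

private lemma cond_to_card {n : ℕ} (N C : ℤ) (hN : 0 < N) (j : Fin n → ℤ)
    (h : ∀ k : Fin n, N * j k ≤ C + ((univ.filter fun s => j s < j k).card : ℤ))
    (i : Fin n) :
    (univ.filter fun k => (C + ((n : ℤ) - 1 - i.val)) / N < j k).card ≤ i.val := by
  by_contra hcon
  push_neg at hcon
  set S := univ.filter fun k => (C + ((n : ℤ) - 1 - i.val)) / N < j k with hS
  obtain ⟨k0, hk0S, hk0min⟩ := Finset.exists_min_image S j (Finset.card_pos.mp (by omega))
  have hsub : (univ.filter fun s => j s < j k0) ⊆ univ \ S := by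
    intro s hs
    simp only [Finset.mem_filter, Finset.mem_univ, true_and] at hs
    simp only [Finset.mem_sdiff, Finset.mem_univ, true_and]
    intro hsS
    exact absurd (hk0min s hsS) (not_le.mpr hs)
  have hc1 : (univ.filter fun s => j s < j k0).card ≤ n - S.card := by
    have := Finset.card_le_card hsub
    rwa [Finset.card_sdiff_of_subset (Finset.subset_univ S), Finset.card_univ, Fintype.card_fin] at this
  have hSn : S.card ≤ n := by
    have := Finset.card_le_card (Finset.subset_univ S)
    rwa [Finset.card_univ, Fintype.card_fin] at this
  have h2 := h k0
  have h3 : ¬ (j k0 ≤ (C + ((n : ℤ) - 1 - i.val)) / N) := by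
    rw [hS, Finset.mem_filter] at hk0S
    exact not_le.mpr hk0S.2
  rw [Int.le_ediv_iff_mul_le hN] at h3
  have h5 := i.isLt
  have hcast : ((univ.filter fun s => j s < j k0).card : ℤ) ≤ (n : ℤ) - 1 - i.val := by
    omega
  have : N * j k0 = j k0 * N := mul_comm _ _
  omega

private lemma card_to_cond {n : ℕ} (N C : ℤ) (hN : 0 < N) (j : Fin n → ℤ)
    (h : ∀ i : Fin n, (univ.filter fun k => (C + ((n : ℤ) - 1 - i.val)) / N < j k).card ≤ i.val)
    (k : Fin n) : N * j k ≤ C + ((univ.filter fun s => j s < j k).card : ℤ) := by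
  set c := (univ.filter fun s => j s < j k).card with hc
  have hkc : k ∉ univ.filter fun s => j s < j k := by simp
  have hcn : c ≤ n - 1 := by
    have hsub : (univ.filter fun s => j s < j k) ⊆ univ.erase k := by
      intro s hs
      rw [Finset.mem_erase]
      refine ⟨?_, Finset.mem_univ s⟩
      rintro rfl
      exact hkc hs
    have := Finset.card_le_card hsub
    rwa [Finset.card_erase_of_mem (Finset.mem_univ k), Finset.card_univ, Fintype.card_fin] at this
  have hn0 : 0 < n := k.pos
  set i : Fin n := ⟨n - 1 - c, by omega⟩ with hi
  have hiv : i.val = n - 1 - c := rfl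
  have hcount := h i
  have hble : j k ≤ (C + ((n : ℤ) - 1 - i.val)) / N := by
    by_contra hcon
    push_neg at hcon
    have hsub : (univ.filter fun s => j k ≤ j s)
        ⊆ univ.filter fun s => (C + ((n : ℤ) - 1 - i.val)) / N < j s := by
      intro s hs
      simp only [Finset.mem_filter, Finset.mem_univ, true_and] at hs ⊢
      exact lt_of_lt_of_le hcon hs
    have hTeq : (univ.filter fun s => j k ≤ j s) = univ \ (univ.filter fun s => j s < j k) := by
      ext s
      simp [not_lt]
    have hTcard : (univ.filter fun s => j k ≤ j s).card = n - c := by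
      rw [hTeq, Finset.card_sdiff_of_subset (Finset.filter_subset _ _), Finset.card_univ, Fintype.card_fin]
    have hle := Finset.card_le_card hsub
    rw [hTcard] at hle
    omega
  rw [Int.le_ediv_iff_mul_le hN] at hble
  have hivz : (i.val : ℤ) = (n : ℤ) - 1 - c := by omega
  have : N * j k = j k * N := mul_comm _ _
  omega

/-- For a prime power `q`, a divisor `m ≥ 2` of `q+1` with `N = (q+1)/m`,
`n ≥ 1` and `0 ≤ A ≤ q-n-N`, the set `J_A` equals `⋃_σ σ(B_t)`, where
`B_t = {j ∈ ℤ^n | 1 ≤ j_k ≤ t - λ_k for all k}`. -/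
theorem stmt_13 (q m N n A : ℕ) (hq : IsPrimePow q) (hm : 2 ≤ m) (hdvd : m ∣ q + 1)
    (hN : q + 1 = m * N) (hn : 1 ≤ n) (hA : (A : ℤ) ≤ (q : ℤ) - (n : ℤ) - (N : ℤ)) :
    {j : Fin n → ℤ | (∀ k, 1 ≤ j k ∧ j k ≤ (m : ℤ) - 1) ∧ ∀ k : Fin n,
        (∑ s ∈ Finset.univ.erase k, ⌈((j k : ℚ) - (j s : ℚ)) / (m : ℚ)⌉) - (N : ℤ) * j k
          ≥ (A : ℤ) - ((q : ℤ) - (n : ℤ))}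
      = ⋃ σ : Equiv.Perm (Fin n), (fun j => j ∘ σ) ''
          {j : Fin n → ℤ | ∀ k : Fin n,
            1 ≤ j k ∧ j k ≤ tA q N A - lamA q N A (k.val + 1)} := by
  have hN0 : 0 < N := by
    rcases Nat.eq_zero_or_pos N with rfl | h
    · simp at hN
    · exact h
  have hNZ : (0 : ℤ) < N := by exact_mod_cast hN0
  set C : ℤ := (q : ℤ) - n - A with hC
  set b : Fin n → ℤ := fun i => (C + ((n : ℤ) - 1 - i.val)) / N with hbdef
  have hb : ∀ k : Fin n, tA q N A - lamA q N A (k.val + 1) = b k := by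
    intro k
    rw [t_sub_lam q N A hN0]
    congr 1
    push_cast
    ring
  have hbmono : ∀ i i' : Fin n, i ≤ i' → b i' ≤ b i := by
    intro i i' hii
    apply Int.ediv_le_ediv hNZ
    have : (i.val : ℤ) ≤ i'.val := by exact_mod_cast hii
    omega
  have hmN : (m : ℤ) * N = (q : ℤ) + 1 := by exact_mod_cast hN.symm
  have hbtop : ∀ i : Fin n, b i ≤ (m : ℤ) - 1 := by
    intro i
    have h0 : i.val = 0 ∨ 0 < i.val := Nat.eq_zero_or_pos _
    have hb0 : b i ≤ b ⟨0, by omega⟩ := hbmono ⟨0, by omega⟩ i (by simp [Fin.le_def])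
    refine le_trans hb0 ?_
    show (C + ((n : ℤ) - 1 - (0 : ℕ))) / N ≤ (m : ℤ) - 1
    have hlt : ¬ ((m : ℤ) ≤ (C + ((n : ℤ) - 1 - (0 : ℕ))) / N) := by
      rw [Int.le_ediv_iff_mul_le hNZ]
      push_cast
      omega
    omega
  ext j
  simp only [Set.mem_setOf_eq, Set.mem_iUnion, Set.mem_image]
  have hsum : (∀ k, 1 ≤ j k ∧ j k ≤ (m : ℤ) - 1) → ∀ k : Fin n,
      (∑ s ∈ Finset.univ.erase k, ⌈((j k : ℚ) - (j s : ℚ)) / (m : ℚ)⌉)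
        = ((univ.filter fun s => j s < j k).card : ℤ) := by
    intro hbd k
    rw [Finset.sum_congr rfl fun s _ => ceil_eq_ite m (j k) (j s) (hbd k).1 (hbd k).2 (hbd s).1 (hbd s).2]
    rw [Finset.sum_boole, Finset.filter_erase,
      Finset.erase_eq_of_notMem (by simp)]
  constructor
  · rintro ⟨hbd, hineq⟩
    have hineq' : ∀ k : Fin n, N * j k ≤ C + ((univ.filter fun s => j s < j k).card : ℤ) := by
      intro k
      have h0 := hineq k
      rw [hsum hbd k] at h0
      omega
    have hcount := cond_to_card N C hNZ j hineq'
    obtain ⟨σ, hσ⟩ := exists_perm_of_card j b hcount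
    refine ⟨σ⁻¹, j ∘ σ, fun k => ⟨(hbd _).1, ?_⟩, ?_⟩
    · rw [hb k]
      exact hσ k
    · funext x
      simp
  · rintro ⟨σ, j', hj', rfl⟩
    have hperm : ∀ k, (j' ∘ σ) (σ⁻¹ k) ≤ b k := by
      intro k
      have := (hj' k).2
      rw [hb k] at this
      simpa using this
    have hcount := card_filter_le_of_perm (j' ∘ σ) b hbmono σ⁻¹ hperm
    have hineq' := card_to_cond N C hNZ (j' ∘ σ) hcount
    have hbd : ∀ k, 1 ≤ (j' ∘ σ) k ∧ (j' ∘ σ) k ≤ (m : ℤ) - 1 := by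
      intro k
      refine ⟨(hj' (σ k)).1, ?_⟩
      have h1 := (hj' (σ k)).2
      rw [hb (σ k)] at h1
      exact le_trans h1 (hbtop (σ k))
    refine ⟨hbd, fun k => ?_⟩
    rw [hsum hbd k]
    have := hineq' k
    omega
end

section
/- Let N ≥ 1 and 1 ≤ β ≤ N be integers, and set λ_k := ⌈(k−β)/N⌉ + 1 for every integer k ≥ 1. For integers n ≥ 1 and t, let B_{t,n} := {(j_1,…,j_n) ∈ ℤ^n : 1 ≤ j_k ≤ t−λ_k for all 1 ≤ k ≤ n} and let S_n(t) denote the cardinality of the union ∪_σ σ(B_{t,n}) over all permutations σ of {1,…,n}, with the convention S_0(t) := 1. Then: (i) if 1 ≤ n ≤ β and t ≥ 1, S_n(t) = (t−1)^n; (ii) if n > β and t ≤ λ_n, S_n(t) = 0; (iii) if n > β and t > λ_n, then S_n(t) = Σ_{i=0}^{n−1} C(n,i)·S_i(λ_n)·(t−λ_n)^{n−i}, where C(n,i) is the binomial coefficient. -/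
/-- `λ_k := ⌈(k-β)/N⌉ + 1`. -/
noncomputable def lam (N β k : ℤ) : ℤ := ⌈((k : ℚ) - (β : ℚ)) / (N : ℚ)⌉ + 1

/-- `S_n(t)`: the cardinality of the union `⋃_σ σ(B_{t,n})` over all permutations `σ`
of `{1,…,n}`, where `B_{t,n} = {j ∈ ℤ^n | 1 ≤ j_k ≤ t - λ_k for all 1 ≤ k ≤ n}`.
(For `n = 0` this is `1`, matching the convention `S_0(t) = 1`.) -/
noncomputable def Sfun (N β : ℤ) (n : ℕ) (t : ℤ) : ℕ :=
  (⋃ σ : Equiv.Perm (Fin n), (fun j => j ∘ σ) ''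
    {j : Fin n → ℤ | ∀ k : Fin n, 1 ≤ j k ∧ j k ≤ t - lam N β ((k.val : ℤ) + 1)}).ncard

/-!
A tuple lies in the union of the permuted boxes iff it can be rearranged so that its `k`-th entry
is at most `t - λ_k`. For `k ≤ β ≤ N` we have `λ_k = 1`, so in (i) the union is the cube
`[1, t - 1]^n`; in (ii) the last slot admits no entry. For (iii), put `s = t - λ_n` and classify a
tuple `j` by the set `A` of coordinates with `j_m > s`.
Every slot accepts the values in `[1, s]`, so the coordinates outside `A` are free in `[1, s]`;
since `λ` is monotone, the coordinates in `A` may be moved to the first `|A|` slots, and after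
subtracting `s` they form an arbitrary tuple counted by `S_{|A|}(λ_n)`. Summing over `A` gives
the binomial formula, in which the term `A = {1,…,n}` vanishes by (ii).
-/

open Finset

lemma lam_monotone {N : ℤ} (β : ℤ) (hN : 0 < N) : Monotone (lam N β) := by
  intro a b hab
  have hN' : (0 : ℚ) < N := by exact_mod_cast hN
  have hab' : (a : ℚ) ≤ b := by exact_mod_cast hab
  unfold lam
  gcongr

lemma lam_eq_one {N β k : ℤ} (hN : 0 < N) (h₁ : β - N < k) (h₂ : k ≤ β) : lam N β k = 1 := by
  have hN' : (0 : ℚ) < N := by exact_mod_cast hN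
  have h₁' : (β : ℚ) - N < k := by exact_mod_cast h₁
  have h₂' : (k : ℚ) ≤ β := by exact_mod_cast h₂
  suffices ⌈((k : ℚ) - β) / N⌉ = 0 by simp [lam, this]
  rw [Int.ceil_eq_zero_iff, Set.mem_Ioc, lt_div_iff₀ hN', div_le_iff₀ hN']
  constructor <;> linarith

lemma Fin.val_le_of_strictMono {i n : ℕ} {f : Fin i → Fin n} (hf : StrictMono f) (r : Fin i) :
    (r : ℕ) ≤ f r := by
  have hsub : (Iio r).image f ⊆ Iio (f r) := by
    intro x hx
    obtain ⟨y, hy, rfl⟩ := mem_image.mp hx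
    exact mem_Iio.mpr (hf (mem_Iio.mp hy))
  simpa [card_image_of_injective _ hf.injective] using card_le_card hsub

variable {ι κ : Type*}

lemma exists_equiv_fin_le_symm {n : ℕ} (e : Fin n ≃ ι) (A : Finset ι) :
    ∃ e' : Fin #A ≃ A, ∀ r : Fin #A, (r : ℕ) ≤ e.symm (e' r) := by
  set K := A.map e.symm.toEmbedding
  have hK : #K = #A := card_map _
  let e' : Fin #A ≃ A := (K.orderIsoOfFin hK).toEquiv.trans
    (e.subtypeEquiv fun k => by simp [K, mem_map_equiv])
  refine ⟨e', fun r => ?_⟩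
  simpa [e'] using Fin.val_le_of_strictMono (K.orderIsoOfFin hK).strictMono r

lemma exists_equiv_fin_extend [Fintype ι] [DecidableEq ι] (A : Finset ι) (e' : Fin #A ≃ A) :
    ∃ e : Fin (Fintype.card ι) ≃ ι,
      ∀ k : Fin (Fintype.card ι), (∀ h : (k : ℕ) < #A, e k = e' ⟨k, h⟩) ∧ (#A ≤ k → e k ∉ A) := by
  have hcard : Fintype.card ι = #A + Fintype.card {m // m ∉ A} := by
    rw [Fintype.card_subtype_compl, Fintype.card_coe]
    have := card_le_univ A
    omega
  let e : Fin (Fintype.card ι) ≃ ι := (finCongr hcard).trans <| finSumFinEquiv.symm.trans <|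
    (e'.sumCongr (Fintype.equivFin _).symm).trans (Equiv.sumCompl (· ∈ A))
  refine ⟨e, fun k => ⟨fun hk => ?_, fun hk => ?_⟩⟩
  · have : finCongr hcard k = Fin.castAdd _ ⟨k, hk⟩ := Fin.ext rfl
    simp only [e, Equiv.trans_apply, this, finSumFinEquiv_symm_apply_castAdd,
      Equiv.sumCongr_apply, Sum.map_inl, Equiv.sumCompl_apply_inl]
  · have : finCongr hcard k = Fin.natAdd _ ⟨k - #A, by omega⟩ := Fin.ext (by simp; omega)
    simp only [e, Equiv.trans_apply, this, finSumFinEquiv_symm_apply_natAdd, Equiv.sumCongr_apply,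
      Sum.map_inr, Equiv.sumCompl_apply_inr]
    exact Subtype.property ((Fintype.equivFin {m // m ∉ A}).symm _)

/-- `⋃_σ σ(B_{t,n})` with `λ` replaced by `l`, for coordinates indexed by any `n`-element type `ι`,
so that a tuple can be restricted to a subset of its coordinates. -/
def symmBox (l : ℤ → ℤ) (n : ℕ) (t : ℤ) : Set (ι → ℤ) :=
  {j | ∃ e : Fin n ≃ ι, ∀ k : Fin n, 1 ≤ j (e k) ∧ j (e k) ≤ t - l ((k : ℤ) + 1)}

lemma Sfun_eq_card_symmBox (N β : ℤ) (n : ℕ) (t : ℤ) :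
    Sfun N β n t = Nat.card (symmBox (ι := Fin n) (lam N β) n t) := by
  rw [Sfun, ← Nat.card_coe_set_eq]
  congr
  ext j
  simp only [Set.mem_iUnion, Set.mem_image, Set.mem_ofPred_eq, symmBox]
  constructor
  · rintro ⟨σ, b, hb, rfl⟩
    exact ⟨σ.symm, by simpa using hb⟩
  · rintro ⟨e, he⟩
    exact ⟨e.symm, j ∘ e, he, by ext; simp⟩

lemma card_pi_Icc [Finite κ] (c : ℤ) :
    Nat.card {v : κ → ℤ // ∀ m, v m ∈ Set.Icc 1 c} = c.toNat ^ Nat.card κ := by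
  calc Nat.card {v : κ → ℤ // ∀ m, v m ∈ Set.Icc 1 c}
      _ = Nat.card (κ → Set.Icc (1 : ℤ) c) := Nat.card_congr Equiv.subtypePiEquivPi
      _ = c.toNat ^ Nat.card κ := by simp [Nat.card_fun, Nat.card_eq_fintype_card]

section symmBox

variable {l : ℤ → ℤ} {n : ℕ} {t : ℤ}

lemma symmBox_subset (hl : Monotone l) :
    symmBox l n t ⊆ {j : ι → ℤ | ∀ m, j m ∈ Set.Icc 1 (t - l 1)} := by
  rintro j ⟨e, he⟩ m
  obtain ⟨h₁, h₂⟩ := he (e.symm m)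
  rw [e.apply_symm_apply] at h₁ h₂
  exact ⟨h₁, h₂.trans (by gcongr; exact hl (by omega))⟩

lemma symmBox_finite [Finite ι] (hl : Monotone l) : (symmBox (ι := ι) l n t).Finite :=
  (Set.Finite.pi' fun _ => Set.finite_Icc 1 (t - l 1)).subset (symmBox_subset hl)

lemma symmBox_eq_empty (hn : n ≠ 0) (ht : t ≤ l n) : symmBox (ι := ι) l n t = ∅ := by
  refine Set.eq_empty_of_forall_notMem fun j ⟨e, he⟩ => ?_
  have := he ⟨n - 1, by omega⟩
  simp only [Nat.cast_pred (Nat.pos_of_ne_zero hn), sub_add_cancel] at this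
  omega

lemma symmBox_eq_of_forall_eq_one (hl : ∀ k : Fin n, l ((k : ℤ) + 1) = 1) :
    symmBox (ι := Fin n) l n t = {j | ∀ m, j m ∈ Set.Icc 1 (t - 1)} := by
  ext j
  constructor
  · rintro ⟨e, he⟩ m
    simpa [hl] using he (e.symm m)
  · intro hj
    exact ⟨Equiv.refl _, fun k => by simpa [hl] using hj k⟩

lemma card_symmBox_congr (f : ι ≃ κ) :
    Nat.card (symmBox (ι := ι) l n t) = Nat.card (symmBox (ι := κ) l n t) := by
  refine Nat.card_congr ((f.arrowCongr (Equiv.refl ℤ)).subtypeEquiv fun j => ?_)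
  constructor
  · rintro ⟨e, he⟩
    exact ⟨e.trans f, by simpa using he⟩
  · rintro ⟨e, he⟩
    exact ⟨e.trans f.symm, by simpa using he⟩

lemma restrict_sub_mem_symmBox (hl : Monotone l) {A : Finset ι} {j : ι → ℤ}
    (hj : j ∈ symmBox l n t) (hA : ∀ m ∈ A, t - l n < j m) :
    (fun m : A => j m - (t - l n)) ∈ symmBox l #A (l n) := by
  obtain ⟨e, he⟩ := hj
  obtain ⟨e', he'⟩ := exists_equiv_fin_le_symm e A
  refine ⟨e', fun r => ⟨?_, ?_⟩⟩
  · linarith [hA _ (e' r).2]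
  · have hle : l ((r : ℤ) + 1) ≤ l ((e.symm (e' r) : ℤ) + 1) := hl (by have := he' r; omega)
    have := (he (e.symm (e' r))).2
    rw [e.apply_symm_apply] at this
    linarith

lemma mem_symmBox_of_restrict [Fintype ι] [DecidableEq ι] (hl : Monotone l)
    (hι : Fintype.card ι = n) (ht : l n ≤ t) {A : Finset ι} {j : ι → ℤ}
    (hA : (fun m : A => j m - (t - l n)) ∈ symmBox l #A (l n))
    (hAc : ∀ m ∉ A, 1 ≤ j m ∧ j m ≤ t - l n) : j ∈ symmBox l n t := by
  subst hι
  obtain ⟨e', he'⟩ := hA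
  obtain ⟨e, he⟩ := exists_equiv_fin_extend A e'
  refine ⟨e, fun k => ?_⟩
  by_cases hk : (k : ℕ) < #A
  · rw [(he k).1 hk]
    have := he' ⟨k, hk⟩
    simp only at this
    omega
  · have hle : l ((k : ℤ) + 1) ≤ l (Fintype.card ι) := hl (by omega)
    have := hAc _ ((he k).2 (by omega))
    omega

lemma mem_symmBox_and_iff [Fintype ι] [DecidableEq ι] (hl : Monotone l)
    (hι : Fintype.card ι = n) (ht : l n ≤ t) (A : Finset ι) (j : ι → ℤ) :
    (j ∈ symmBox l n t ∧ ∀ m, m ∈ A ↔ t - l n < j m) ↔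
      (fun m : A => j m - (t - l n)) ∈ symmBox l #A (l n) ∧
        ∀ m : {m // m ∉ A}, j m ∈ Set.Icc 1 (t - l n) := by
  constructor
  · rintro ⟨hj, hA⟩
    refine ⟨restrict_sub_mem_symmBox hl hj fun m hm => (hA m).1 hm, fun m => ⟨?_, ?_⟩⟩
    · exact (symmBox_subset hl hj m).1
    · exact le_of_not_gt fun h => m.2 ((hA m).2 h)
  · rintro ⟨hA, hAc⟩
    refine ⟨mem_symmBox_of_restrict hl hι ht hA fun m hm => hAc ⟨m, hm⟩,
      fun m => ⟨fun hm => ?_, ?_⟩⟩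
    · linarith [(symmBox_subset hl hA ⟨m, hm⟩).1]
    · contrapose!
      exact fun hm => (hAc ⟨m, hm⟩).2

lemma card_symmBox_fiber [Fintype ι] [DecidableEq ι] (hl : Monotone l)
    (hι : Fintype.card ι = n) (ht : l n ≤ t) (A : Finset ι) :
    Nat.card {j // j ∈ symmBox l n t ∧ ∀ m, m ∈ A ↔ t - l n < j m} =
      Nat.card (symmBox (ι := A) l #A (l n)) * (t - l n).toNat ^ (n - #A) := by
  let split : (ι → ℤ) ≃ (A → ℤ) × ({m // m ∉ A} → ℤ) :=
    (Equiv.piEquivPiSubtypeProd (· ∈ A) fun _ => ℤ).trans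
      ((Equiv.piCongrRight fun _ => Equiv.subRight (t - l n)).prodCongr (Equiv.refl _))
  rw [Nat.card_congr ((split.subtypeEquiv (mem_symmBox_and_iff hl hι ht A)).trans
    (Equiv.subtypeProdEquivProd (q := fun v => ∀ m, v m ∈ Set.Icc 1 (t - l n)))),
    Nat.card_prod]
  congr 1
  rw [← hι, card_pi_Icc, Nat.card_eq_fintype_card, Fintype.card_subtype_compl, Fintype.card_coe]

lemma card_symmBox_eq_sum [Fintype ι] [DecidableEq ι] (hl : Monotone l)
    (hι : Fintype.card ι = n) (ht : l n ≤ t) :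
    Nat.card (symmBox (ι := ι) l n t) =
      ∑ A : Finset ι, Nat.card (symmBox (ι := A) l #A (l n)) * (t - l n).toNat ^ (n - #A) := by
  have := (symmBox_finite (ι := ι) (n := n) (t := t) hl).to_subtype
  let f : symmBox (ι := ι) l n t → Finset ι := fun j => univ.filter fun m => t - l n < j.1 m
  rw [← Nat.card_congr (Equiv.sigmaFiberEquiv f), Nat.card_sigma]
  refine sum_congr rfl fun A _ => ?_
  rw [← card_symmBox_fiber hl hι ht A]
  exact Nat.card_congr ((Equiv.subtypeSubtypeEquivSubtypeInter (· ∈ symmBox l n t)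
    fun j => univ.filter (fun m => t - l n < j m) = A).trans
    (Equiv.subtypeEquivRight fun j => by simp [Finset.ext_iff, iff_comm]))

theorem card_symmBox_fin_eq_sum (hl : Monotone l) (ht : l n ≤ t) :
    (Nat.card (symmBox (ι := Fin n) l n t) : ℤ) = ∑ i ∈ range (n + 1),
      (n.choose i : ℤ) * Nat.card (symmBox (ι := Fin i) l i (l n)) * (t - l n) ^ (n - i) := by
  rw [card_symmBox_eq_sum hl (Fintype.card_fin n) ht]
  simp_rw [fun A : Finset (Fin n) => card_symmBox_congr (l := l) (t := l n) A.equivFin]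
  rw [← powerset_univ, sum_powerset_apply_card
    (fun i => Nat.card (symmBox (ι := Fin i) l i (l n)) * (t - l n).toNat ^ (n - i)),
    card_univ, Fintype.card_fin]
  push_cast [nsmul_eq_mul, Int.toNat_of_nonneg (sub_nonneg.mpr ht)]
  refine sum_congr rfl fun i _ => ?_
  ring

end symmBox

theorem stmt_14_general (N β : ℤ) (hN : 1 ≤ N) (hβ2 : β ≤ N)
    (n : ℕ) (hn : 1 ≤ n) (t : ℤ) :
    (((n : ℤ) ≤ β ∧ 1 ≤ t) → ((Sfun N β n t : ℤ) = (t - 1) ^ n)) ∧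
    ((β < (n : ℤ) ∧ t ≤ lam N β (n : ℤ)) → Sfun N β n t = 0) ∧
    ((β < (n : ℤ) ∧ lam N β (n : ℤ) < t) →
      ((Sfun N β n t : ℤ) = ∑ i ∈ Finset.range n,
        (n.choose i : ℤ) * (Sfun N β i (lam N β (n : ℤ)) : ℤ)
          * (t - lam N β (n : ℤ)) ^ (n - i))) := by
  have hmono := lam_monotone β (by omega : 0 < N)
  simp only [Sfun_eq_card_symmBox]
  refine ⟨fun ⟨hnβ, ht⟩ => ?_, fun ⟨_, ht⟩ => ?_, fun ⟨_, ht⟩ => ?_⟩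
  · have hlam (k : Fin n) : lam N β ((k : ℤ) + 1) = 1 := lam_eq_one (by omega) (by omega) (by omega)
    rw [symmBox_eq_of_forall_eq_one hlam, Set.coe_ofPred, card_pi_Icc, Nat.card_fin,
      Nat.cast_pow, Int.toNat_of_nonneg (by omega)]
  · rw [symmBox_eq_empty (by omega) ht, Nat.card_of_isEmpty]
  · rw [card_symmBox_fin_eq_sum hmono ht.le, sum_range_succ,
      symmBox_eq_empty (by omega) le_rfl]
    simp

/-- For integers `N ≥ 1`, `1 ≤ β ≤ N`:
(i) if `1 ≤ n ≤ β` and `t ≥ 1` then `S_n(t) = (t-1)^n`;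
(ii) if `n > β` and `t ≤ λ_n` then `S_n(t) = 0`;
(iii) if `n > β` and `t > λ_n` then `S_n(t) = Σ_{i=0}^{n-1} C(n,i)·S_i(λ_n)·(t-λ_n)^{n-i}`. -/
theorem stmt_14 (N β : ℤ) (hN : 1 ≤ N) (hβ1 : 1 ≤ β) (hβ2 : β ≤ N)
    (n : ℕ) (hn : 1 ≤ n) (t : ℤ) :
    (((n : ℤ) ≤ β ∧ 1 ≤ t) → ((Sfun N β n t : ℤ) = (t - 1) ^ n)) ∧
    ((β < (n : ℤ) ∧ t ≤ lam N β (n : ℤ)) → Sfun N β n t = 0) ∧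
    ((β < (n : ℤ) ∧ lam N β (n : ℤ) < t) →
      ((Sfun N β n t : ℤ) = ∑ i ∈ Finset.range n,
        (n.choose i : ℤ) * (Sfun N β i (lam N β (n : ℤ)) : ℤ)
          * (t - lam N β (n : ℤ)) ^ (n - i))) :=
  stmt_14_general N β hN hβ2 n hn t
end

section
/- Let q be a prime power, m ≥ 2 a divisor of q+1, N := (q+1)/m, and 2 ≤ n ≤ q−N an integer. Then the number of n-tuples (t_1,…,t_n) of positive integers such that for every k ∈ {1,…,n}, m·Σ_{s≠k} ⌈(t_k − t_s)/m⌉ + m·(q−n)·⌈t_k/m⌉ > q·t_k, equals Σ_{A=0}^{q−n−N} C(A+n−1, n−1)·S_n^A, where for each A one sets t_A := ⌈(q−A)/N⌉, β_A := q−A−N(t_A−1), λ_k^{(A)} := ⌈(k−β_A)/N⌉ + 1, and S_n^A is the cardinality of the union over all permutations σ of {1,…,n} of σ({(j_1,…,j_n) ∈ ℤ^n : 1 ≤ j_k ≤ t_A − λ_k^{(A)} for all k}). -/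
/-- `S_n^A`: the cardinality of the union over all permutations `σ` of `{1,…,n}` of
`σ({j ∈ ℤ^n | 1 ≤ j_k ≤ t_A - λ_k^{(A)} for all k})`. -/
noncomputable def SnA (q N n A : ℕ) : ℕ :=
  (⋃ σ : Equiv.Perm (Fin n), (fun j => j ∘ σ) ''
    {j : Fin n → ℤ | ∀ k : Fin n, 1 ≤ j k ∧ j k ≤ tA q N A - lamA q N A (k.val + 1)}).ncard


/-!
Write `t_k = m (c_k - 1) + e_k` with `c_k ≥ 1` and `1 ≤ e_k ≤ m`. Then `⌈t_k / m⌉ = c_k` and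
`⌈(t_k - t_s) / m⌉ = c_k - c_s + [e_s < e_k]`, and since `q = mN - 1` the inequality at `k`
becomes `N e_k + #{s | e_k ≤ e_s} ≤ q - A` with `A := Σ c_s - n`. So the condition splits into
one on `c` alone (its sum `n + A`: stars and bars give `C(A+n-1, n-1)` choices) and one on `e`
alone. Listing `e` in decreasing order, the latter says that the `i`-th largest entry `v` satisfies
`N v + i ≤ q - A`, which is exactly the box in the definition of `S_n^A`, up to permutation.
The smallest entry of `e` forces `A ≤ q - n - N`.
-/

open Finset OrderDual

section CeilDiv

variable {K : Type*} [Field K] [LinearOrder K] [IsStrictOrderedRing K] [FloorRing K]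

theorem ceil_intCast_div_natCast_eq {m : ℕ} (hm : 0 < m) {x d : ℤ}
    (h₁ : m * (d - 1) < x) (h₂ : x ≤ m * d) : ⌈(x : K) / m⌉ = d := by
  have hm' : (0 : K) < m := by exact_mod_cast hm
  rw [Int.ceil_eq_iff, lt_div_iff₀ hm', div_le_iff₀ hm']
  constructor
  · exact_mod_cast (by linarith : (d - 1) * (m : ℤ) < x)
  · exact_mod_cast (by linarith : x ≤ d * (m : ℤ))

theorem ceil_intCast_div_natCast_le_iff {N : ℕ} (hN : 0 < N) (x d : ℤ) :
    ⌈(x : K) / N⌉ ≤ d ↔ x ≤ N * d := by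
  rw [Int.ceil_le, div_le_iff₀ (by exact_mod_cast hN : (0 : K) < N), mul_comm]
  exact_mod_cast Iff.rfl

theorem ceil_digits_div {m : ℕ} (hm : 0 < m) (c : ℤ) {e : ℤ} (he₁ : 1 ≤ e) (he₂ : e ≤ m) :
    ⌈((m * (c - 1) + e : ℤ) : K) / m⌉ = c :=
  ceil_intCast_div_natCast_eq hm (by linarith) (by linarith)

theorem ceil_digits_sub_div {m : ℕ} (hm : 0 < m) (c c' : ℤ) {e e' : ℤ} (he₁ : 1 ≤ e)
    (he₂ : e ≤ m) (he₁' : 1 ≤ e') (he₂' : e' ≤ m) :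
    ⌈(((m * (c - 1) + e : ℤ) : K) - ((m * (c' - 1) + e' : ℤ) : K)) / m⌉
      = c - c' + if e' < e then 1 else 0 := by
  rw [← Int.cast_sub]
  apply ceil_intCast_div_natCast_eq hm <;> split_ifs <;> nlinarith

end CeilDiv

-- With `q = mN - 1` the left side reads `m (L + N (m - e) - C) > m - e`, where `0 ≤ m - e < m`.
theorem mul_lt_mul_add_mul_sub_iff {m N q C L e : ℤ} (hq : q + 1 = m * N) (he₁ : 1 ≤ e)
    (he₂ : e ≤ m) : m * C < m * L + q * (m - e) ↔ N * e + C ≤ q + L := by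
  obtain rfl : q = m * N - 1 := by linarith
  constructor
  · intro h
    by_contra! h'
    nlinarith
  · intro h
    nlinarith

def joinDigits {ι : Type*} (m : ℕ) (p : (ι → ℤ) × (ι → ℤ)) : ι → ℤ :=
  fun k => m * (p.1 k - 1) + p.2 k

theorem exists_joinDigits_eq {ι : Type*} {m : ℕ} (hm : 0 < m) {t : ι → ℤ}
    (ht : ∀ k, 1 ≤ t k) :
    ∃ c e : ι → ℤ, (∀ k, 1 ≤ c k) ∧ (∀ k, 1 ≤ e k ∧ e k ≤ m) ∧ joinDigits m (c, e) = t := by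
  have hm' : (0 : ℤ) < m := by exact_mod_cast hm
  refine ⟨fun k => (t k - 1) / m + 1, fun k => (t k - 1) % m + 1, fun k => ?_,
    fun k => ⟨?_, ?_⟩, funext fun k => ?_⟩
  · linarith [Int.ediv_nonneg (by linarith [ht k] : 0 ≤ t k - 1) hm'.le]
  · linarith [Int.emod_nonneg (t k - 1) hm'.ne']
  · linarith [Int.emod_lt_of_pos (t k - 1) hm']
  · simp only [joinDigits]
    linarith [Int.mul_ediv_add_emod (t k - 1) m]

theorem joinDigits_injOn {ι : Type*} {m : ℕ} (hm : 0 < m) :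
    Set.InjOn (joinDigits (ι := ι) m) {p | ∀ k, 1 ≤ p.2 k ∧ p.2 k ≤ m} := by
  rintro ⟨c, e⟩ he ⟨c', e'⟩ he' h
  obtain rfl : c = c' := funext fun k => by
    rw [← ceil_digits_div (K := ℚ) hm (c k) (he k).1 (he k).2,
      ← ceil_digits_div (K := ℚ) hm (c' k) (he' k).1 (he' k).2]
    exact congrArg (fun t : ι → ℤ => ⌈(t k : ℚ) / m⌉) h
  refine Prod.ext rfl (funext fun k => ?_)
  simpa [joinDigits] using congrFun h k

def GapInequality (q m n : ℕ) (t : Fin n → ℤ) (k : Fin n) : Prop :=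
  (m : ℤ) * (∑ s ∈ Finset.univ.erase k, ⌈((t k : ℚ) - (t s : ℚ)) / (m : ℚ)⌉)
    + (m : ℤ) * ((q : ℤ) - (n : ℤ)) * ⌈(t k : ℚ) / (m : ℚ)⌉ > (q : ℤ) * t k

theorem sum_ite_lt_eq {ι : Type*} [Fintype ι] (e : ι → ℤ) (k : ι) :
    ∑ s, (if e s < e k then (1 : ℤ) else 0) = Fintype.card ι - #{s | e k ≤ e s} := by
  rw [sum_boole, eq_sub_iff_add_eq]
  exact_mod_cast (by simpa [not_lt] using
    card_filter_add_card_filter_not (s := univ) (fun s => e s < e k))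

theorem gapInequality_joinDigits_iff {q m N n : ℕ} (hqmN : q + 1 = m * N) {c e : Fin n → ℤ}
    (he : ∀ k, 1 ≤ e k ∧ e k ≤ m) (k : Fin n) :
    GapInequality q m n (joinDigits m (c, e)) k ↔
      N * e k + ∑ s, c s + #{s | e k ≤ e s} ≤ q + n := by
  have hm : 0 < m := Nat.pos_of_ne_zero (by rintro rfl; simp at hqmN)
  have hsum : ∑ s ∈ univ.erase k, (c k - c s + if e s < e k then 1 else 0)
      = n * c k - ∑ s, c s + (n - #{s | e k ≤ e s}) := by
    rw [sum_erase _ (by simp), sum_add_distrib, sum_sub_distrib, sum_ite_lt_eq]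
    simp
  unfold GapInequality joinDigits
  dsimp only
  rw [ceil_digits_div hm _ (he k).1 (he k).2,
    sum_congr rfl fun s _ => ceil_digits_sub_div hm _ _ (he k).1 (he k).2 (he s).1 (he s).2, hsum]
  calc _ ↔ m * ∑ s, c s < m * (n - #{s | e k ≤ e s}) + q * (m - e k) := by
        constructor <;> intro h <;> linarith
    _ ↔ _ := by
        rw [mul_lt_mul_add_mul_sub_iff (by exact_mod_cast hqmN : (q : ℤ) + 1 = m * N)
          (he k).1 (he k).2]
        constructor <;> intro h <;> linarith

section Compositions

variable (ι : Type*) [Fintype ι]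

def compositions (A : ℕ) : Set (ι → ℤ) :=
  {c | (∀ k, 1 ≤ c k) ∧ ∑ k, c k = Fintype.card ι + A}

def compositionsEquiv (A : ℕ) : compositions ι A ≃ {P : ι → ℕ // ∑ i, P i = A} where
  toFun c := ⟨fun k => (c.1 k - 1).toNat, by
    have h : ∀ k, ((c.1 k - 1).toNat : ℤ) = c.1 k - 1 := fun k => by
      have := c.2.1 k; omega
    zify
    simp only [h, sum_sub_distrib, c.2.2]
    simp⟩
  invFun P := ⟨fun k => P.1 k + 1, fun k => by simp, by
    simp [sum_add_distrib, ← P.2, add_comm]⟩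
  left_inv c := Subtype.ext <| funext fun k => by
    have := c.2.1 k
    simp only [Int.ofNat_toNat]
    omega
  right_inv P := Subtype.ext <| funext fun k => by simp

theorem finite_compositions (A : ℕ) : (compositions ι A).Finite := by
  classical
  exact Set.finite_coe_iff.1 <| Finite.of_equiv _
    ((compositionsEquiv ι A).trans (Sym.equivNatSumOfFintype ι A).symm).symm

theorem ncard_compositions (A : ℕ) :
    (compositions ι A).ncard = (Fintype.card ι + A - 1).choose A := by
  classical
  rw [← Nat.card_coe_set_eq,
    Nat.card_congr ((compositionsEquiv ι A).trans (Sym.equivNatSumOfFintype ι A).symm),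
    Nat.card_eq_fintype_card, Sym.card_sym_eq_choose]

variable {ι}

theorem disjoint_compositions {A B : ℕ} (h : A ≠ B) :
    Disjoint (compositions ι A) (compositions ι B) :=
  Set.disjoint_left.2 fun _ hA hB => h <| by have := hA.2.symm.trans hB.2; omega

end Compositions

theorem exists_perm_forall_add_le_iff {α : Type*} [LinearOrder α] {n : ℕ} {g : α → ℤ}
    (hg : Monotone g) (x : Fin n → α) (B : ℤ) :
    (∃ τ : Equiv.Perm (Fin n), ∀ i : Fin n, g (x (τ i)) + (i + 1 : ℕ) ≤ B) ↔
      ∀ k, g (x k) + #{s | x k ≤ x s} ≤ B := by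
  constructor
  · rintro ⟨τ, hτ⟩ k
    -- `i` is the last position, in the order `τ`, of a coordinate `≥ x k`
    set S : Finset (Fin n) := {s | x k ≤ x s}
    obtain ⟨i, hi, hmax⟩ := (S.image τ.symm).exists_max_image id
      ⟨τ.symm k, mem_image_of_mem _ (by simp [S])⟩
    have hcard : #S ≤ i + 1 :=
      calc #S = #(S.image τ.symm) := (card_image_of_injective _ τ.symm.injective).symm
        _ ≤ #(Iic i) := card_le_card fun j hj => mem_Iic.2 (hmax j hj)
        _ = i + 1 := Fin.card_Iic i
    have hxi : x k ≤ x (τ i) := by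
      obtain ⟨s, hs, rfl⟩ := mem_image.1 hi
      simpa [S] using hs
    calc g (x k) + #S ≤ g (x (τ i)) + (i + 1 : ℕ) := by gcongr; exact hg hxi
      _ ≤ B := hτ i
  · intro h
    set τ := Tuple.sort (toDual ∘ x)
    refine ⟨τ, fun i => ?_⟩
    have hcard : i + 1 ≤ #{s | x (τ i) ≤ x s} :=
      calc i + 1 = #((Iic i).image τ) := by
            rw [card_image_of_injective _ τ.injective, Fin.card_Iic]
        _ ≤ _ := card_le_card fun s hs => by
            obtain ⟨j, hj, rfl⟩ := mem_image.1 hs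
            simpa using Tuple.monotone_sort (toDual ∘ x) (mem_Iic.1 hj)
    calc g (x (τ i)) + (i + 1 : ℕ) ≤ g (x (τ i)) + #{s | x (τ i) ≤ x s} := by gcongr
      _ ≤ B := h (τ i)

section Residues

variable {ι : Type*} [Fintype ι]

variable (ι) in
def residues (q N A : ℕ) : Set (ι → ℤ) :=
  {e | (∀ k, 1 ≤ e k) ∧ ∀ k, N * e k + #{s | e k ≤ e s} ≤ (q : ℤ) - A}

theorem finite_residues {q N A : ℕ} (hN : 0 < N) : (residues ι q N A).Finite := by
  classical
  refine (Set.finite_Icc (1 : ι → ℤ) (fun _ => (q : ℤ))).subset fun e he =>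
    ⟨fun k => he.1 k, fun k => ?_⟩
  have := he.2 k
  have : e k ≤ N * e k := le_mul_of_one_le_left (by linarith [he.1 k]) (by exact_mod_cast hN)
  dsimp only
  omega

theorem lt_of_mem_residues {q m N A : ℕ} (hqmN : q + 1 = m * N) {e : ι → ℤ}
    (he : e ∈ residues ι q N A) (k : ι) : e k < m := by
  have h₁ : 0 < #{s | e k ≤ e s} := card_pos.2 ⟨k, by simp⟩
  have h₂ : (N : ℤ) * e k < N * m := by
    have hq : (q : ℤ) + 1 = m * N := by exact_mod_cast hqmN
    linarith [he.2 k]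
  exact lt_of_mul_lt_mul_left h₂ (by positivity)

theorem add_le_of_mem_residues [Nonempty ι] {q N A : ℕ} {e : ι → ℤ}
    (he : e ∈ residues ι q N A) : (N + A + Fintype.card ι : ℤ) ≤ q := by
  obtain ⟨k, hk⟩ := Finite.exists_min e
  have hall : #{s | e k ≤ e s} = Fintype.card ι := by
    rw [filter_true_of_mem fun s _ => hk s, card_univ]
  have := he.2 k
  rw [hall] at this
  nlinarith [he.1 k]

theorem le_tA_sub_lamA_iff {q N A : ℕ} (hN : 0 < N) (v : ℤ) (i : ℕ) :
    v ≤ tA q N A - lamA q N A i ↔ N * v + i ≤ (q : ℤ) - A := by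
  have h : v ≤ tA q N A - lamA q N A i ↔ (i - betaA q N A : ℤ) ≤ N * (tA q N A - 1 - v) := by
    rw [← ceil_intCast_div_natCast_le_iff (K := ℚ) hN, lamA]
    push_cast
    omega
  rw [h, betaA]
  constructor <;> intro _ <;> linarith

theorem SnA_eq_ncard_residues {q N n A : ℕ} (hN : 0 < N) :
    SnA q N n A = (residues (Fin n) q N A).ncard := by
  rw [SnA]
  congr 1
  ext e
  simp only [Set.mem_iUnion, Set.mem_image, Set.mem_ofPred_eq, le_tA_sub_lamA_iff hN, residues,
    ← exists_perm_forall_add_le_iff (g := fun v => (N : ℤ) * v)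
      (fun _ _ h => mul_le_mul_of_nonneg_left h N.cast_nonneg)]
  constructor
  · rintro ⟨σ, x, hx, rfl⟩
    exact ⟨fun k => (hx (σ k)).1, σ.symm, fun i => by simpa using (hx i).2⟩
  · rintro ⟨h₁, τ, hτ⟩
    exact ⟨τ.symm, e ∘ τ, fun k => ⟨h₁ _, hτ k⟩, by ext; simp⟩

end Residues

theorem setOf_gapInequality_eq_image {q m N n : ℕ} (hqmN : q + 1 = m * N) (hn : 0 < n) :
    {t : Fin n → ℤ | (∀ k, 1 ≤ t k) ∧ ∀ k, GapInequality q m n t k} =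
      joinDigits m '' ⋃ A ∈ (range (q - n - N + 1) : Set ℕ),
        compositions (Fin n) A ×ˢ residues (Fin n) q N A := by
  have hm : 0 < m := Nat.pos_of_ne_zero (by rintro rfl; simp at hqmN)
  have : Nonempty (Fin n) := ⟨⟨0, hn⟩⟩
  ext t
  constructor
  · rintro ⟨ht, hgap⟩
    obtain ⟨c, e, hc, he, rfl⟩ := exists_joinDigits_eq hm ht
    have hcond := fun k => (gapInequality_joinDigits_iff hqmN he k).1 (hgap k)
    obtain ⟨A, hA⟩ : ∃ A : ℕ, ∑ k, c k = n + A := by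
      have : (n : ℤ) ≤ ∑ k, c k := by
        simpa using card_nsmul_le_sum univ (fun k => c k) 1 fun k _ => hc k
      exact ⟨(∑ k, c k - n).toNat, by omega⟩
    have hres : e ∈ residues (Fin n) q N A :=
      ⟨fun k => (he k).1, fun k => by linarith [hcond k]⟩
    have hAq := add_le_of_mem_residues hres
    rw [Fintype.card_fin] at hAq
    exact ⟨(c, e), Set.mem_biUnion (x := A) (by simp; omega) ⟨⟨hc, by simpa using hA⟩, hres⟩,
      rfl⟩
  · rintro ⟨⟨c, e⟩, hmem, rfl⟩
    obtain ⟨A, -, ⟨hc, hsum⟩, hres⟩ := Set.mem_iUnion₂.1 hmem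
    have he : ∀ k, 1 ≤ e k ∧ e k ≤ m := fun k =>
      ⟨hres.1 k, (lt_of_mem_residues hqmN hres k).le⟩
    refine ⟨fun k => ?_, fun k => (gapInequality_joinDigits_iff hqmN he k).2 ?_⟩
    · simp only [joinDigits]
      nlinarith [hc k, (he k).1]
    · rw [Fintype.card_fin] at hsum
      linarith [hres.2 k]

theorem stmt_15_general (q m N n : ℕ) (hN : q + 1 = m * N) (hn : 2 ≤ n) :
    ({t : Fin n → ℤ | (∀ k, 1 ≤ t k) ∧ ∀ k : Fin n,
        (m : ℤ) * (∑ s ∈ Finset.univ.erase k, ⌈((t k : ℚ) - (t s : ℚ)) / (m : ℚ)⌉)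
          + (m : ℤ) * ((q : ℤ) - (n : ℤ)) * ⌈(t k : ℚ) / (m : ℚ)⌉
          > (q : ℤ) * t k}).ncard
      = ∑ A ∈ Finset.range (q - n - N + 1), (A + n - 1).choose (n - 1) * SnA q N n A := by
  have hm : 0 < m := Nat.pos_of_ne_zero (by rintro rfl; simp at hN)
  have hN₀ : 0 < N := Nat.pos_of_ne_zero (by rintro rfl; simp at hN)
  change {t | (∀ k, 1 ≤ t k) ∧ ∀ k, GapInequality q m n t k}.ncard = _
  rw [setOf_gapInequality_eq_image hN (by omega),
    ((joinDigits_injOn hm).mono fun p hp => ?_).ncard_image,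
    Set.Finite.ncard_biUnion (finite_toSet _)
      (fun A _ => (finite_compositions _ A).prod (finite_residues hN₀))
      (fun A _ B _ hAB => Set.disjoint_prod.2 (.inl (disjoint_compositions hAB))),
    finsum_mem_coe_finset]
  · refine sum_congr rfl fun A _ => ?_
    rw [Set.ncard_prod, ncard_compositions, SnA_eq_ncard_residues hN₀, Fintype.card_fin,
      Nat.add_comm n, Nat.choose_symm_of_eq_add (by omega : A + n - 1 = A + (n - 1))]
  · obtain ⟨A, -, -, hres⟩ := Set.mem_iUnion₂.1 hp
    exact fun k => ⟨hres.1 k, (lt_of_mem_residues hN hres k).le⟩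

/-- For a prime power `q`, a divisor `m ≥ 2` of `q+1` with `N = (q+1)/m`,
and `2 ≤ n ≤ q-N`, the number of pure gap `n`-tuples of the quotient Hermitian curve
equals `Σ_{A=0}^{q-n-N} C(A+n-1, n-1)·S_n^A`. -/
theorem stmt_15 (q m N n : ℕ) (hq : IsPrimePow q) (hm : 2 ≤ m) (hdvd : m ∣ q + 1)
    (hN : q + 1 = m * N) (hn : 2 ≤ n) (hnq : (n : ℤ) ≤ (q : ℤ) - (N : ℤ)) :
    ({t : Fin n → ℤ | (∀ k, 1 ≤ t k) ∧ ∀ k : Fin n,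
        (m : ℤ) * (∑ s ∈ Finset.univ.erase k, ⌈((t k : ℚ) - (t s : ℚ)) / (m : ℚ)⌉)
          + (m : ℤ) * ((q : ℤ) - (n : ℤ)) * ⌈(t k : ℚ) / (m : ℚ)⌉
          > (q : ℤ) * t k}).ncard
      = ∑ A ∈ Finset.range (q - n - N + 1), (A + n - 1).choose (n - 1) * SnA q N n A :=
  stmt_15_general q m N n hN hn
end

section
/- Let q be a prime power, m ≥ 2 a divisor of q+1, N := (q+1)/m, and suppose q−2−N ≥ 0. Then the number of pairs (t_1,t_2) of positive integers such that, for k = 1 and k = 2, m·⌈(t_k − t_s)/m⌉ + m·(q−2)·⌈t_k/m⌉ > q·t_k (where s is the other index), equals (q+1)(m−1)·((q+1)(m−1) − 2m + N + 7)/12 − q(m−1). -/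
open Finset

/-- Gauss-type sum with truncated subtraction. -/
lemma aux_sum_sub : ∀ K : ℕ, ∀ S : ℕ, S ≤ K + 1 →
    2 * ∑ i ∈ Icc 1 K, (S - i) = S * (S - 1) := by
  intro K
  induction K with
  | zero =>
    intro S hS
    interval_cases S <;> simp
  | succ K ih =>
    intro S hS
    rw [Finset.sum_Icc_succ_top (by omega)]
    by_cases h : S ≤ K + 1
    · rw [Nat.sub_eq_zero_of_le (by omega), Nat.add_zero]
      exact ih S h
    · have hS2 : S = K + 2 := by omega
      subst hS2
      have e1 : ∑ i ∈ Icc 1 K, (K + 2 - i) = (∑ i ∈ Icc 1 K, (K + 1 - i)) + K := by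
        have : ∀ i ∈ Icc 1 K, K + 2 - i = (K + 1 - i) + 1 := by
          intro i hi; simp only [mem_Icc] at hi; omega
        rw [Finset.sum_congr rfl this, Finset.sum_add_distrib, Finset.sum_const,
          Nat.card_Icc, smul_eq_mul]
        omega
      have e2 := ih (K + 1) (by omega)
      rw [e1]
      have e3 : K + 2 - (K + 1) = 1 := by omega
      rw [e3]
      have e4 : K + 2 - 1 = K + 1 := by omega
      rw [e4]
      simp only [Nat.add_sub_cancel] at e2 ⊢
      zify at e2 ⊢
      linear_combination e2

/-- count of pairs (i1,i2) in [1,K]^2 with i1+i2 ≤ S. -/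
lemma aux_card_inner (K S : ℕ) (h : S ≤ K + 1) :
    2 * #((Finset.Icc 1 K ×ˢ Finset.Icc 1 K).filter (fun ip => ip.1 + ip.2 ≤ S))
      = S * (S - 1) := by
  rw [Finset.card_filter, Finset.sum_product]
  have e1 : ∀ i1 ∈ Icc 1 K,
      (∑ i2 ∈ Icc 1 K, if i1 + i2 ≤ S then 1 else 0) = S - i1 := by
    intro i1 hi1
    rw [← Finset.card_filter]
    have : (Icc 1 K).filter (fun i2 => i1 + i2 ≤ S) = Icc 1 (S - i1) := by
      ext i2
      simp only [mem_filter, mem_Icc] at *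
      omega
    rw [this, Nat.card_Icc]
    omega
  rw [Finset.sum_congr rfl e1]
  exact aux_sum_sub K S h

lemma aux_sumA (N : ℕ) : ∀ n : ℕ,
    6 * ∑ j ∈ Icc 1 n, ((N : ℤ) * j) * ((N : ℤ) * j - 1)
      = (N : ℤ)^2 * n * (n+1) * (2*n+1) - 3 * N * n * (n+1) := by
  intro n
  induction n with
  | zero => simp
  | succ k ih =>
    rw [Finset.sum_Icc_succ_top (by omega)]
    push_cast
    push_cast at ih
    linear_combination ih

/-- `gg N j1 j2` is the summand counting (times 2) pairs (i1,i2). -/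
noncomputable def gg (N j1 j2 : ℕ) : ℤ :=
  ((N : ℤ) * (min j1 j2 : ℕ) - if j1 = j2 then 1 else 0) *
    ((N : ℤ) * (min j1 j2 : ℕ) - (if j1 = j2 then 1 else 0) - 1)

lemma aux_sumW (N : ℕ) : ∀ n : ℕ,
    6 * ∑ j1 ∈ Icc 1 n, ∑ j2 ∈ Icc 1 n, gg N j1 j2
      = 12 * n - 7 * N * n - 9 * N * n^2 - 2 * N * n^3
        + (N:ℤ)^2 * n + 2 * (N:ℤ)^2 * n^2 + 2 * (N:ℤ)^2 * n^3 + (N:ℤ)^2 * n^4 := by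
  intro n
  induction n with
  | zero => simp
  | succ k ih =>
    have hrow : ∀ j ∈ Icc 1 k, gg N j (k+1) = ((N : ℤ) * j) * ((N : ℤ) * j - 1) := by
      intro j hj
      simp only [mem_Icc] at hj
      have h1 : min j (k+1) = j := by omega
      have h2 : j ≠ k + 1 := by omega
      simp [gg, h1, h2]
    have hcol : ∀ j ∈ Icc 1 k, gg N (k+1) j = ((N : ℤ) * j) * ((N : ℤ) * j - 1) := by
      intro j hj
      simp only [mem_Icc] at hj
      have h1 : min (k+1) j = j := by omega
      have h2 : k + 1 ≠ j := by omega
      simp [gg, h1, h2]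
    have hdiag : gg N (k+1) (k+1)
        = ((N : ℤ) * (k+1) - 1) * ((N : ℤ) * (k+1) - 2) := by
      simp only [gg, min_self, if_pos rfl]
      push_cast
      ring
    have e0 : ∀ j1 ∈ Icc 1 k, (∑ j2 ∈ Icc 1 (k+1), gg N j1 j2)
        = (∑ j2 ∈ Icc 1 k, gg N j1 j2) + ((N : ℤ) * j1) * ((N : ℤ) * j1 - 1) := by
      intro j1 hj1
      rw [Finset.sum_Icc_succ_top (by omega), hrow j1 hj1]
    rw [Finset.sum_Icc_succ_top (by omega), Finset.sum_congr rfl e0,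
      Finset.sum_add_distrib, Finset.sum_Icc_succ_top (by omega),
      Finset.sum_congr rfl hcol, hdiag]
    have hA := aux_sumA N k
    push_cast
    push_cast at ih hA
    linear_combination ih + 2 * hA

/-- `Bnat` is the ℕ bound on i1+i2. -/
def Bnat (N j1 j2 : ℕ) : ℕ := N * min j1 j2 - (if j1 = j2 then 1 else 0)

lemma aux_Bnat_cast (N j1 j2 : ℕ) (hN : 1 ≤ N) (h1 : 1 ≤ j1) (h2 : 1 ≤ j2) :
    ((Bnat N j1 j2 : ℕ) : ℤ)
      = (N : ℤ) * (min j1 j2 : ℕ) - (if j1 = j2 then 1 else 0) := by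
  have hb : (if j1 = j2 then 1 else 0) ≤ N * min j1 j2 := by
    have : 1 ≤ N * min j1 j2 := Nat.one_le_iff_ne_zero.2 (by positivity)
    split <;> omega
  rw [Bnat, Nat.cast_sub hb]
  congr 1
  split <;> simp

lemma aux_cast_mul (b : ℕ) : ((b * (b - 1) : ℕ) : ℤ) = (b : ℤ) * ((b : ℤ) - 1) := by
  cases b with
  | zero => simp
  | succ k => push_cast [Nat.add_sub_cancel]; ring

lemma aux_gg_cast (N j1 j2 : ℕ) (hN : 1 ≤ N) (h1 : 1 ≤ j1) (h2 : 1 ≤ j2) :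
    ((Bnat N j1 j2 * (Bnat N j1 j2 - 1) : ℕ) : ℤ) = gg N j1 j2 := by
  rw [aux_cast_mul, aux_Bnat_cast N j1 j2 hN h1 h2, gg]

/-- ceiling of (m*i - j)/m is i when 0 ≤ j < m. -/
lemma aux_ceil (m : ℕ) (hm : 0 < m) (i j : ℤ) (h0 : 0 ≤ j) (h1 : j < m) :
    ⌈(((m : ℤ) * i - j : ℤ) : ℚ) / (m : ℚ)⌉ = i := by
  have hm' : (0 : ℚ) < (m : ℚ) := by positivity
  rw [Int.ceil_eq_iff]
  have h0' : (0 : ℚ) ≤ (j : ℤ) := by exact_mod_cast h0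
  have h1' : ((j : ℤ) : ℚ) < (m : ℚ) := by exact_mod_cast h1
  constructor
  · rw [lt_div_iff₀ hm']
    push_cast
    push_cast at h1'
    nlinarith
  · rw [div_le_iff₀ hm']
    push_cast
    push_cast at h0'
    nlinarith

lemma aux_ceil_diff (m : ℕ) (hm : 0 < m) (i1 i2 j1 j2 : ℤ)
    (h10 : 0 ≤ j1) (h11 : j1 < m) (h20 : 0 ≤ j2) (h21 : j2 < m) :
    ⌈((((m : ℤ) * i1 - j1) - ((m : ℤ) * i2 - j2) : ℤ) : ℚ) / (m : ℚ)⌉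
      = i1 - i2 + (if j1 < j2 then 1 else 0) := by
  split
  · rename_i h
    have e : (((m : ℤ) * i1 - j1) - ((m : ℤ) * i2 - j2) : ℤ)
        = (m : ℤ) * (i1 - i2 + 1) - ((m : ℤ) + j1 - j2) := by ring
    rw [e, aux_ceil m hm _ _ (by omega) (by omega)]
  · rename_i h
    have e : (((m : ℤ) * i1 - j1) - ((m : ℤ) * i2 - j2) : ℤ)
        = (m : ℤ) * (i1 - i2 + 0) - (j1 - j2) := by ring
    rw [e, aux_ceil m hm _ _ (by omega) (by omega)]

/-- rewrite one Weierstrass inequality in simplified form. -/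
lemma aux_red (q m c i1 i2 j1 : ℤ) :
    (m * (i1 - i2 + c) + m * (q - 2) * i1 > q * (m * i1 - j1))
      ↔ q * j1 + m * c > m * (i1 + i2) := by
  constructor <;> intro h <;> nlinarith [h]

/-- the key equivalence: both inequalities ⟺ i1+i2 ≤ N·min(j1,j2) − [j1=j2]. -/
lemma aux_ineq_iff (m N : ℕ) (hm : 2 ≤ m) (hN : 1 ≤ N) (i1 i2 j1 j2 : ℤ)
    (hj1 : 1 ≤ j1) (hj1' : j1 < m) (hj2 : 1 ≤ j2) (hj2' : j2 < m)
    (hi1 : 1 ≤ i1) (hi2 : 1 ≤ i2) :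
    ((((m : ℤ) * N - 1) * j1 + m * (if j1 < j2 then (1:ℤ) else 0) > m * (i1 + i2)) ∧
     (((m : ℤ) * N - 1) * j2 + m * (if j2 < j1 then (1:ℤ) else 0) > m * (i1 + i2)))
      ↔ i1 + i2 ≤ (N : ℤ) * min j1 j2 - (if j1 = j2 then 1 else 0) := by
  have hmZ : (2 : ℤ) ≤ (m : ℤ) := by exact_mod_cast hm
  have hNZ : (1 : ℤ) ≤ (N : ℤ) := by exact_mod_cast hN
  set s : ℤ := i1 + i2 with hs
  rcases lt_trichotomy j1 j2 with h | h | h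
  · rw [if_pos h, if_neg (by omega), if_neg (by omega), min_eq_left (le_of_lt h)]
    constructor
    · rintro ⟨h1, h2⟩
      -- m*s < (mN-1)j1 + m ≤ m*N*j1 + m  ⇒ s < N*j1 + 1
      have hlt : (m : ℤ) * s < (m : ℤ) * ((N:ℤ) * j1 + 1) := by nlinarith
      have := lt_of_mul_lt_mul_left hlt (by positivity : (0:ℤ) ≤ (m:ℤ))
      linarith
    · intro hle
      have hms : (m : ℤ) * s ≤ (m : ℤ) * ((N:ℤ) * j1) :=
        mul_le_mul_of_nonneg_left (by linarith) (by positivity)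
      constructor
      · nlinarith
      · -- (mN-1)*j2 ≥ (mN-1)*(j1+1) = mNj1 + mN - j1 - 1 > mNj1 ≥ m*s
        have hq0 : (0 : ℤ) ≤ (m : ℤ) * N - 1 := by nlinarith
        have := mul_le_mul_of_nonneg_left (by linarith : j1 + 1 ≤ j2) hq0
        nlinarith
  · subst h
    rw [if_neg (lt_irrefl j1), if_pos rfl, min_self]
    constructor
    · rintro ⟨h1, _⟩
      have hlt : (m : ℤ) * s < (m : ℤ) * ((N:ℤ) * j1) := by nlinarith
      have := lt_of_mul_lt_mul_left hlt (by positivity : (0:ℤ) ≤ (m:ℤ))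
      linarith
    · intro hle
      have hms : (m : ℤ) * s ≤ (m : ℤ) * ((N:ℤ) * j1 - 1) :=
        mul_le_mul_of_nonneg_left (by linarith) (by positivity)
      constructor <;> nlinarith
  · rw [if_neg (by omega), if_pos h, if_neg (by omega), min_eq_right (le_of_lt h)]
    constructor
    · rintro ⟨h1, h2⟩
      have hlt : (m : ℤ) * s < (m : ℤ) * ((N:ℤ) * j2 + 1) := by nlinarith
      have := lt_of_mul_lt_mul_left hlt (by positivity : (0:ℤ) ≤ (m:ℤ))
      linarith
    · intro hle
      have hms : (m : ℤ) * s ≤ (m : ℤ) * ((N:ℤ) * j2) :=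
        mul_le_mul_of_nonneg_left (by linarith) (by positivity)
      have hq0 : (0 : ℤ) ≤ (m : ℤ) * N - 1 := by nlinarith
      have := mul_le_mul_of_nonneg_left (by linarith : j2 + 1 ≤ j1) hq0
      constructor <;> nlinarith

/-- injectivity of (i,j) ↦ m*i - j for j ∈ [1,m-1]. -/
lemma aux_inj (m : ℕ) (i1 j1 i2 j2 : ℤ) (hj1 : 1 ≤ j1) (hj1' : j1 < m)
    (hj2 : 1 ≤ j2) (hj2' : j2 < m)
    (h : (m : ℤ) * i1 - j1 = (m : ℤ) * i2 - j2) : i1 = i2 ∧ j1 = j2 := by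
  have hmZ : (1 : ℤ) ≤ (m : ℤ) := by linarith
  have hi : i1 = i2 := by
    by_contra hne
    rcases lt_or_gt_of_ne hne with hlt | hlt
    · have : (m:ℤ) * (i1 + 1) ≤ (m:ℤ) * i2 :=
        mul_le_mul_of_nonneg_left (by linarith) (by linarith)
      nlinarith
    · have : (m:ℤ) * (i2 + 1) ≤ (m:ℤ) * i1 :=
        mul_le_mul_of_nonneg_left (by linarith) (by linarith)
      nlinarith
  exact ⟨hi, by rw [hi] at h; linarith⟩

/-- For a prime power `q`, a divisor `m ≥ 2` of `q+1` with `N = (q+1)/m`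
and `q-2-N ≥ 0`, the number of pure gap pairs of the quotient Hermitian curve equals
`(q+1)(m-1)·((q+1)(m-1) - 2m + N + 7)/12 - q(m-1)` (stated multiplied through by 12). -/
theorem stmt_17 (q m N : ℕ) (hq : IsPrimePow q) (hm : 2 ≤ m) (hdvd : m ∣ q + 1)
    (hN : q + 1 = m * N) (hqN : 0 ≤ (q : ℤ) - 2 - (N : ℤ)) :
    12 * (({p : ℤ × ℤ | 1 ≤ p.1 ∧ 1 ≤ p.2 ∧
        ((m : ℤ) * ⌈((p.1 : ℚ) - (p.2 : ℚ)) / (m : ℚ)⌉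
          + (m : ℤ) * ((q : ℤ) - 2) * ⌈(p.1 : ℚ) / (m : ℚ)⌉ > (q : ℤ) * p.1) ∧
        ((m : ℤ) * ⌈((p.2 : ℚ) - (p.1 : ℚ)) / (m : ℚ)⌉
          + (m : ℤ) * ((q : ℤ) - 2) * ⌈(p.2 : ℚ) / (m : ℚ)⌉ > (q : ℤ) * p.2)}).ncard : ℤ)
      = ((q : ℤ) + 1) * ((m : ℤ) - 1)
          * (((q : ℤ) + 1) * ((m : ℤ) - 1) - 2 * (m : ℤ) + (N : ℤ) + 7)
        - 12 * ((q : ℤ) * ((m : ℤ) - 1)) := by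
  have hq2 : 2 ≤ q := hq.two_le
  have hN1 : 1 ≤ N := by
    rcases Nat.eq_zero_or_pos N with h | h
    · rw [h, Nat.mul_zero] at hN; omega
    · exact h
  have hqZ : (q : ℤ) = (m : ℤ) * N - 1 := by
    have : ((q : ℤ) + 1) = (m : ℤ) * N := by exact_mod_cast hN
    linarith
  have hm0 : 0 < m := by omega
  have hmZ : (2 : ℤ) ≤ (m : ℤ) := by exact_mod_cast hm
  have hNZ : (1 : ℤ) ≤ (N : ℤ) := by exact_mod_cast hN1
  set K : ℕ := N * (m - 1) with hK
  have hKZ : (K : ℤ) = (N : ℤ) * ((m : ℤ) - 1) := by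
    rw [hK]; push_cast [Nat.cast_sub (by omega : 1 ≤ m)]; ring
  set J : Finset ℕ := Finset.Icc 1 (m - 1) with hJ
  set T : Finset ((ℕ × ℕ) × (ℕ × ℕ)) :=
    ((J ×ˢ J) ×ˢ (Finset.Icc 1 K ×ˢ Finset.Icc 1 K)).filter
      (fun x => x.2.1 + x.2.2 ≤ Bnat N x.1.1 x.1.2) with hT
  set φ : ((ℕ × ℕ) × (ℕ × ℕ)) → ℤ × ℤ :=
    fun x => ((m : ℤ) * x.2.1 - x.1.1, (m : ℤ) * x.2.2 - x.1.2) with hφ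
  -- membership in T unfolded
  have hmemT : ∀ j1 j2 i1 i2 : ℕ, ((j1, j2), (i1, i2)) ∈ T ↔
      (1 ≤ j1 ∧ j1 ≤ m - 1) ∧ (1 ≤ j2 ∧ j2 ≤ m - 1) ∧ (1 ≤ i1 ∧ i1 ≤ K) ∧
      (1 ≤ i2 ∧ i2 ≤ K) ∧ i1 + i2 ≤ Bnat N j1 j2 := by
    intro j1 j2 i1 i2
    simp only [hT, Finset.mem_filter, Finset.mem_product, Finset.mem_Icc, hJ]
    tauto
  -- the set equals the image of T
  have hset : {p : ℤ × ℤ | 1 ≤ p.1 ∧ 1 ≤ p.2 ∧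
        ((m : ℤ) * ⌈((p.1 : ℚ) - (p.2 : ℚ)) / (m : ℚ)⌉
          + (m : ℤ) * ((q : ℤ) - 2) * ⌈(p.1 : ℚ) / (m : ℚ)⌉ > (q : ℤ) * p.1) ∧
        ((m : ℤ) * ⌈((p.2 : ℚ) - (p.1 : ℚ)) / (m : ℚ)⌉
          + (m : ℤ) * ((q : ℤ) - 2) * ⌈(p.2 : ℚ) / (m : ℚ)⌉ > (q : ℤ) * p.2)}
      = ↑(T.image φ) := by
    ext p
    simp only [Set.mem_setOf_eq, Finset.coe_image, Set.mem_image, Finset.mem_coe]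
    constructor
    · rintro ⟨h1, h2, hA, hB⟩
      -- decompose p.1 = m*i1 - j1, p.2 = m*i2 - j2
      set i1 : ℤ := -((-p.1) / (m : ℤ)) with hi1d
      set j1 : ℤ := (m : ℤ) * i1 - p.1 with hj1d
      set i2 : ℤ := -((-p.2) / (m : ℤ)) with hi2d
      set j2 : ℤ := (m : ℤ) * i2 - p.2 with hj2d
      have hmne : (m : ℤ) ≠ 0 := by omega
      have hj1m : j1 = (-p.1) % (m : ℤ) := by
        rw [hj1d, hi1d, Int.emod_def]; ring
      have hj2m : j2 = (-p.2) % (m : ℤ) := by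
        rw [hj2d, hi2d, Int.emod_def]; ring
      have hj10 : 0 ≤ j1 := hj1m ▸ Int.emod_nonneg _ hmne
      have hj1m' : j1 < m := hj1m ▸ Int.emod_lt_of_pos _ (by omega)
      have hj20 : 0 ≤ j2 := hj2m ▸ Int.emod_nonneg _ hmne
      have hj2m' : j2 < m := hj2m ▸ Int.emod_lt_of_pos _ (by omega)
      have ht1 : p.1 = (m : ℤ) * i1 - j1 := by rw [hj1d]; ring
      have ht2 : p.2 = (m : ℤ) * i2 - j2 := by rw [hj2d]; ring
      have hi1p : 1 ≤ i1 := by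
        by_contra hc
        push_neg at hc
        have : (m : ℤ) * i1 ≤ 0 :=
          mul_nonpos_of_nonneg_of_nonpos (by positivity) (by omega)
        omega
      have hi2p : 1 ≤ i2 := by
        by_contra hc
        push_neg at hc
        have : (m : ℤ) * i2 ≤ 0 :=
          mul_nonpos_of_nonneg_of_nonpos (by positivity) (by omega)
        omega
      -- rewrite the ceilings
      rw [ht1, ht2] at hA hB
      rw [← Int.cast_sub] at hA hB
      rw [aux_ceil_diff m hm0 i1 i2 j1 j2 hj10 hj1m' hj20 hj2m',
        aux_ceil m hm0 i1 j1 hj10 hj1m'] at hA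
      rw [aux_ceil_diff m hm0 i2 i1 j2 j1 hj20 hj2m' hj10 hj1m',
        aux_ceil m hm0 i2 j2 hj20 hj2m'] at hB
      have r1 := (aux_red (q : ℤ) (m : ℤ) _ i1 i2 j1).mp hA
      have r2 := (aux_red (q : ℤ) (m : ℤ) _ i2 i1 j2).mp hB
      rw [hqZ] at r1 r2
      -- show j1, j2 ≥ 1
      have hcb1 : (m : ℤ) * (if j1 < j2 then (1:ℤ) else 0) ≤ m := by
        split <;> simp <;> omega
      have hcb2 : (m : ℤ) * (if j2 < j1 then (1:ℤ) else 0) ≤ m := by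
        split <;> simp <;> omega
      have hs2 : (m : ℤ) * 2 ≤ (m : ℤ) * (i1 + i2) :=
        mul_le_mul_of_nonneg_left (by omega) (by positivity)
      have hj1p : 1 ≤ j1 := by
        by_contra hc
        push_neg at hc
        have hj1z : (((m:ℤ) * N - 1) * j1) = 0 := by
          have hz : j1 = 0 := by omega
          rw [hz, mul_zero]
        linarith [r1, hcb1, hs2]
      have hj2p : 1 ≤ j2 := by
        by_contra hc
        push_neg at hc
        have hj2z : (((m:ℤ) * N - 1) * j2) = 0 := by
          have hz : j2 = 0 := by omega
          rw [hz, mul_zero]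
        linarith [r2, hcb2, hs2]
      rw [show i2 + i1 = i1 + i2 from add_comm _ _] at r2
      have hle := (aux_ineq_iff m N hm hN1 i1 i2 j1 j2 hj1p hj1m' hj2p hj2m'
        hi1p hi2p).mp ⟨r1, r2⟩
      -- bound i1, i2
      have hminb : (N : ℤ) * min j1 j2 ≤ (N : ℤ) * ((m : ℤ) - 1) :=
        mul_le_mul_of_nonneg_left (by omega) (by positivity)
      have hiteb : (0 : ℤ) ≤ (if j1 = j2 then (1:ℤ) else 0) := by positivity
      have hi1K : i1 ≤ (K : ℤ) := by rw [hKZ]; omega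
      have hi2K : i2 ≤ (K : ℤ) := by rw [hKZ]; omega
      -- construct the witness
      refine ⟨((j1.toNat, j2.toNat), (i1.toNat, i2.toNat)), ?_, ?_⟩
      · rw [hmemT]
        have hc1 : ((j1.toNat : ℤ)) = j1 := Int.toNat_of_nonneg hj10
        have hc2 : ((j2.toNat : ℤ)) = j2 := Int.toNat_of_nonneg hj20
        have hc3 : ((i1.toNat : ℤ)) = i1 := Int.toNat_of_nonneg (by omega)
        have hc4 : ((i2.toNat : ℤ)) = i2 := Int.toNat_of_nonneg (by omega)
        refine ⟨⟨by omega, by omega⟩, ⟨by omega, by omega⟩,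
          ⟨by omega, by omega⟩, ⟨by omega, by omega⟩, ?_⟩
        have hBc := aux_Bnat_cast N j1.toNat j2.toNat hN1 (by omega) (by omega)
        have : ((i1.toNat + i2.toNat : ℕ) : ℤ) ≤ ((Bnat N j1.toNat j2.toNat : ℕ) : ℤ) := by
          rw [hBc]
          push_cast [Nat.cast_min, hc1, hc2, hc3, hc4]
          have hee : (if j1.toNat = j2.toNat then (1:ℤ) else 0)
              = (if j1 = j2 then (1:ℤ) else 0) := by
            by_cases h : j1 = j2
            · rw [if_pos h, if_pos (by omega)]
            · rw [if_neg h, if_neg (by omega)]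
          rw [hee]
          omega
        exact_mod_cast this
      · rw [hφ]
        simp only
        rw [Int.toNat_of_nonneg hj10, Int.toNat_of_nonneg hj20,
          Int.toNat_of_nonneg (by omega : (0:ℤ) ≤ i1),
          Int.toNat_of_nonneg (by omega : (0:ℤ) ≤ i2)]
        rw [← ht1, ← ht2]
    · rintro ⟨⟨⟨j1, j2⟩, ⟨i1, i2⟩⟩, hxT, rfl⟩
      rw [hmemT] at hxT
      obtain ⟨⟨hj11, hj12⟩, ⟨hj21, hj22⟩, ⟨hi11, hi12⟩, ⟨hi21, hi22⟩, hle⟩ := hxT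
      have hj1Z : (1 : ℤ) ≤ (j1 : ℤ) := by exact_mod_cast hj11
      have hj1Z' : (j1 : ℤ) < m := by
        have : j1 < m := by omega
        exact_mod_cast this
      have hj2Z : (1 : ℤ) ≤ (j2 : ℤ) := by exact_mod_cast hj21
      have hj2Z' : (j2 : ℤ) < m := by
        have : j2 < m := by omega
        exact_mod_cast this
      have hi1Z : (1 : ℤ) ≤ (i1 : ℤ) := by exact_mod_cast hi11
      have hi2Z : (1 : ℤ) ≤ (i2 : ℤ) := by exact_mod_cast hi21
      have hleZ : (i1 : ℤ) + i2 ≤ (N : ℤ) * min (j1 : ℤ) (j2 : ℤ)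
          - (if (j1 : ℤ) = (j2 : ℤ) then 1 else 0) := by
        have := (Nat.cast_le (α := ℤ)).mpr hle
        rw [aux_Bnat_cast N j1 j2 hN1 hj11 hj21] at this
        push_cast [Nat.cast_min] at this
        have hee : (if j1 = j2 then (1:ℤ) else 0)
            = (if (j1:ℤ) = (j2:ℤ) then (1:ℤ) else 0) := by
          by_cases h : j1 = j2
          · rw [if_pos h, if_pos (by exact_mod_cast h)]
          · rw [if_neg h, if_neg (by exact_mod_cast (fun hh => h (by exact_mod_cast hh)))]
        rw [hee] at this
        convert this using 2
      have hcond := (aux_ineq_iff m N hm hN1 (i1:ℤ) (i2:ℤ) (j1:ℤ) (j2:ℤ)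
        hj1Z hj1Z' hj2Z hj2Z' hi1Z hi2Z).mpr hleZ
      obtain ⟨r1, r2⟩ := hcond
      rw [← hqZ] at r1 r2
      have hA := (aux_red (q : ℤ) (m : ℤ) _ (i1:ℤ) (i2:ℤ) (j1:ℤ)).mpr r1
      have hB := (aux_red (q : ℤ) (m : ℤ) _ (i2:ℤ) (i1:ℤ) (j2:ℤ)).mpr
        (by rw [show (i2:ℤ) + i1 = (i1:ℤ) + i2 from add_comm _ _]; exact r2)
      have hmul1 : (m : ℤ) * 1 ≤ (m : ℤ) * (i1 : ℤ) :=
        mul_le_mul_of_nonneg_left hi1Z (by positivity)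
      have hmul2 : (m : ℤ) * 1 ≤ (m : ℤ) * (i2 : ℤ) :=
        mul_le_mul_of_nonneg_left hi2Z (by positivity)
      refine ⟨by simp only [hφ]; omega, by simp only [hφ]; omega, ?_, ?_⟩
      · simp only [hφ]
        rw [← Int.cast_sub,
          aux_ceil_diff m hm0 (i1:ℤ) (i2:ℤ) (j1:ℤ) (j2:ℤ) (by omega) hj1Z' (by omega) hj2Z',
          aux_ceil m hm0 (i1:ℤ) (j1:ℤ) (by omega) hj1Z']
        exact hA
      · simp only [hφ]
        rw [← Int.cast_sub,
          aux_ceil_diff m hm0 (i2:ℤ) (i1:ℤ) (j2:ℤ) (j1:ℤ) (by omega) hj2Z' (by omega) hj1Z',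
          aux_ceil m hm0 (i2:ℤ) (j2:ℤ) (by omega) hj2Z']
        exact hB
  rw [hset, Set.ncard_coe_finset]
  have hinj : Set.InjOn φ ↑T := by
    rintro ⟨⟨j1, j2⟩, ⟨i1, i2⟩⟩ hx ⟨⟨j1', j2'⟩, ⟨i1', i2'⟩⟩ hy hxy
    rw [Finset.mem_coe, hmemT] at hx hy
    have e1 := congrArg Prod.fst hxy
    have e2 := congrArg Prod.snd hxy
    simp only [hφ] at e1 e2
    obtain ⟨ha1, hb1⟩ := aux_inj m (i1:ℤ) (j1:ℤ) (i1':ℤ) (j1':ℤ)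
      (by exact_mod_cast hx.1.1) (by exact_mod_cast (by omega : j1 < m))
      (by exact_mod_cast hy.1.1) (by exact_mod_cast (by omega : j1' < m)) e1
    obtain ⟨ha2, hb2⟩ := aux_inj m (i2:ℤ) (j2:ℤ) (i2':ℤ) (j2':ℤ)
      (by exact_mod_cast hx.2.1.1) (by exact_mod_cast (by omega : j2 < m))
      (by exact_mod_cast hy.2.1.1) (by exact_mod_cast (by omega : j2' < m)) e2
    simp only [Prod.mk.injEq]
    refine ⟨⟨?_, ?_⟩, ?_, ?_⟩ <;> omega
  rw [Finset.card_image_of_injOn hinj]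
  have hcount : 2 * T.card
      = ∑ j1 ∈ J, ∑ j2 ∈ J, Bnat N j1 j2 * (Bnat N j1 j2 - 1) := by
    simp only [hT, Finset.card_filter, Finset.sum_product]
    rw [Finset.mul_sum]
    refine Finset.sum_congr rfl fun j1 hj1 => ?_
    rw [Finset.mul_sum]
    refine Finset.sum_congr rfl fun j2 hj2 => ?_
    rw [show (∑ x1 ∈ Finset.Icc 1 K, ∑ x2 ∈ Finset.Icc 1 K,
          if x1 + x2 ≤ Bnat N j1 j2 then 1 else 0)
        = #((Finset.Icc 1 K ×ˢ Finset.Icc 1 K).filter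
            (fun ip => ip.1 + ip.2 ≤ Bnat N j1 j2)) from by
      rw [Finset.card_filter, Finset.sum_product]]
    apply aux_card_inner
    rw [hJ, Finset.mem_Icc] at hj1
    calc Bnat N j1 j2 ≤ N * min j1 j2 := Nat.sub_le _ _
      _ ≤ N * (m - 1) := Nat.mul_le_mul_left N (le_trans (min_le_left _ _) hj1.2)
      _ ≤ K + 1 := by omega
  have hcast : 2 * ((T.card : ℕ) : ℤ) = ∑ j1 ∈ J, ∑ j2 ∈ J, gg N j1 j2 := by
    have h0 : (2 : ℤ) * (T.card : ℤ)
        = ∑ j1 ∈ J, ((∑ j2 ∈ J, Bnat N j1 j2 * (Bnat N j1 j2 - 1) : ℕ) : ℤ) := by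
      rw [← Nat.cast_sum]
      exact_mod_cast congrArg (Nat.cast : ℕ → ℤ) hcount
    rw [h0]
    refine Finset.sum_congr rfl fun j1 hj1 => ?_
    rw [Nat.cast_sum]
    refine Finset.sum_congr rfl fun j2 hj2 => ?_
    rw [hJ, Finset.mem_Icc] at hj1 hj2
    exact aux_gg_cast N j1 j2 hN1 hj1.1 hj2.1
  have hW := aux_sumW N (m - 1)
  have hmm : ((m - 1 : ℕ) : ℤ) = (m : ℤ) - 1 := by
    push_cast [Nat.cast_sub (by omega : 1 ≤ m)]
    ring
  rw [hmm] at hW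
  rw [hqZ]
  linear_combination hW + 6 * hcast
end
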